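/- arXiv:1402.5157 — 9 statements merged into one kernel-verified Lean document; each statement's English description precedes it below -/
import Mathlib

section
/- For partitions λ and μ of n, μ and λ have the same p-core if and only if there exists a permutation σ of {1,...,n} such that λ_i - i ≡ μ_{σ(i)} - σ(i) (mod p) for all 1 ≤ i ≤ n (where partitions are padded with zeros to length n). -/
/-- `f` is a partition with all (nonzero) parts among the first `n` rows:
a weakly decreasing function `ℕ → ℕ` (0-indexed rows) vanishing from index `n` on. -/
def IsPartWithin (n : ℕ) (f : ℕ → ℕ) : Prop :=
  (∀ i j, i ≤ j → f j ≤ f i) ∧ ∀ i, n ≤ i → f i = 0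

/-- The size `|f|` of a partition `f` supported in the first `n` rows. -/
def psize (n : ℕ) (f : ℕ → ℕ) : ℕ := ∑ i ∈ Finset.range n, f i

/-- The number of beads on runner `r` of James' abacus of the partition `f` with
`b = n` beads and `p` runners: beads occupy positions `f i - (i+1) + n` for
`0 ≤ i < n` (this is the β-sequence `λ_j - j + n`, `1 ≤ j ≤ n`).  The `p`-core of
`f` is obtained by sliding all beads as far up their runners as possible, so it is
determined exactly by these runner counts; in particular two partitions of `n`
have the same `p`-core if and only if all their runner counts agree. -/
def runnerCount (p n : ℕ) (f : ℕ → ℕ) (r : ZMod p) : ℕ :=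
  ((Finset.range n).filter fun i => (((f i : ℤ) - (i + 1) + n : ℤ) : ZMod p) = r).card

/-!
Runner `r` of the abacus with `n` beads holds exactly the rows `i` whose content residue
`λ_i - i` is `r - n`. So equal runner counts say that the two residue maps on `Fin n` have
equinumerous fibres, and two maps on a finite set have equinumerous fibres exactly when
they differ by a permutation of the domain.
-/

open Finset

theorem Fintype.card_fiber_eq_iff_exists_perm {ι β : Type*} [Fintype ι] [DecidableEq β]
    (F G : ι → β) :
    (∀ b, #{i | F i = b} = #{i | G i = b}) ↔ ∃ σ : Equiv.Perm ι, ∀ i, F i = G (σ i) := by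
  constructor
  · intro h
    have e : ∀ b, {i // F i = b} ≃ {i // G i = b} := fun b =>
      Fintype.equivOfCardEq (by simpa only [Fintype.card_subtype] using h b)
    exact ⟨Equiv.ofFiberEquiv e, fun i => (Equiv.ofFiberEquiv_map e i).symm⟩
  · rintro ⟨σ, hσ⟩ b
    simp only [hσ]
    exact Finset.card_equiv σ (by simp)

/-- `λ_j - j` modulo `p` for the 1-indexed row `j = i + 1`. -/
def contentResidue (p : ℕ) {n : ℕ} (f : ℕ → ℕ) (i : Fin n) : ZMod p :=
  (((f i : ℤ) - ((i : ℕ) + 1) : ℤ) : ZMod p)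

theorem runnerCount_eq_card_contentResidue (p n : ℕ) (f : ℕ → ℕ) (r : ZMod p) :
    runnerCount p n f r = #{i : Fin n | contentResidue p f i = r - n} := by
  rw [runnerCount, card_filter, ← Fin.sum_univ_eq_sum_range, ← card_filter]
  simp only [contentResidue, eq_sub_iff_add_eq, Int.cast_add, Int.cast_natCast]

theorem sameCore_iff_perm_congr_general (p n : ℕ) (f g : ℕ → ℕ) :
    (∀ r : ZMod p, runnerCount p n f r = runnerCount p n g r) ↔
      ∃ σ : Equiv.Perm (Fin n), ∀ i : Fin n,
        (((f (i : ℕ) : ℤ) - ((i : ℕ) + 1) : ℤ) : ZMod p)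
          = (((g ((σ i : Fin n) : ℕ) : ℤ) - (((σ i : Fin n) : ℕ) + 1) : ℤ) : ZMod p) := by
  simp_rw [runnerCount_eq_card_contentResidue]
  rw [(Equiv.addRight (n : ZMod p)).surjective.forall]
  simp only [Equiv.coe_addRight, add_sub_cancel_right]
  exact Fintype.card_fiber_eq_iff_exists_perm (contentResidue p f) (contentResidue p g)

/-- partitions `λ, μ` of `n` have the same `p`-core iff there is a
permutation `σ` of `{1,…,n}` with `λ_i - i ≡ μ_{σ(i)} - σ(i) (mod p)` for all `i`. -/
theorem sameCore_iff_perm_congr (p n : ℕ) (hp : p.Prime)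
    (f g : ℕ → ℕ) (hf : IsPartWithin n f) (hg : IsPartWithin n g)
    (hfn : psize n f = n) (hgn : psize n g = n) :
    (∀ r : ZMod p, runnerCount p n f r = runnerCount p n g r) ↔
      ∃ σ : Equiv.Perm (Fin n), ∀ i : Fin n,
        (((f (i : ℕ) : ℤ) - ((i : ℕ) + 1) : ℤ) : ZMod p)
          = (((g ((σ i : Fin n) : ℕ) : ℤ) - (((σ i : Fin n) : ℕ) + 1) : ℤ) : ZMod p) :=
  sameCore_iff_perm_congr_general p n f g
end

section
/- Let λ, μ be partitions of n, padded to n-tuples. Then λ + ρ_n and μ + ρ_n agree up to permutation modulo p if and only if μ lies in the orbit of λ under the ρ_n-shifted action of the affine Weyl group of type A_{n-1} with parameter p (i.e. the group generated by the type A_{n-1} Weyl group acting on ℝ^n by permuting coordinates, together with translations by p(ε_i - ε_j)). -/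
/-!
The affine Weyl group changes a vector by a permutation and a translation in `p` times the root
lattice, so it preserves the residues mod `p` up to permutation and the coordinate sum.
Conversely, if `x` and `y` have the same coordinate sum and `x i ≡ y (σ i) (mod p)`, then
`y - x ∘ σ⁻¹` is divisible by `p` with sum zero, hence lies in `p` times the root lattice.
For partitions `λ, μ` of the same `n`, the vectors `λ + ρ_n` and `μ + ρ_n` have the same sum.
-/

open Finset

theorem exists_sum_eq_zero_mul_of_dvd {ι : Type*} [Fintype ι] (p : ℤ) (d : ι → ℤ)
    (hdvd : ∀ i, p ∣ d i) (hsum : ∑ i, d i = 0) :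
    ∃ t : ι → ℤ, ∑ i, t i = 0 ∧ ∀ i, d i = p * t i := by
  refine ⟨fun i => d i / p, ?_, fun i => (Int.mul_ediv_cancel' (hdvd i)).symm⟩
  rcases eq_or_ne p 0 with rfl | hp
  · simp
  · have : p * ∑ i, d i / p = 0 := by
      rw [mul_sum, ← hsum]
      exact sum_congr rfl fun i _ => Int.mul_ediv_cancel' (hdvd i)
    exact (mul_eq_zero.mp this).resolve_left hp

theorem exists_perm_intCast_eq_iff_exists_perm_add_mul {ι : Type*} [Fintype ι] (p : ℕ)
    (x y : ι → ℤ) (hsum : ∑ i, x i = ∑ i, y i) :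
    (∃ σ : Equiv.Perm ι, ∀ i, (x i : ZMod p) = (y (σ i) : ZMod p)) ↔
      ∃ σ : Equiv.Perm ι, ∃ t : ι → ℤ, ∑ i, t i = 0 ∧ ∀ i, y i = x (σ i) + p * t i := by
  constructor
  · rintro ⟨σ, hσ⟩
    have hdvd : ∀ i, (p : ℤ) ∣ y i - x (σ.symm i) := fun i => by
      rw [← ZMod.intCast_eq_intCast_iff_dvd_sub, hσ, σ.apply_symm_apply]
    have hd_sum : ∑ i, (y i - x (σ.symm i)) = 0 := by
      rw [sum_sub_distrib, Equiv.sum_comp σ.symm x, hsum, sub_self]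
    obtain ⟨t, ht_sum, ht⟩ := exists_sum_eq_zero_mul_of_dvd _ _ hdvd hd_sum
    exact ⟨σ.symm, t, ht_sum, fun i => by rw [← ht]; ring⟩
  · rintro ⟨σ, t, -, h⟩
    refine ⟨σ.symm, fun i => ?_⟩
    rw [h, σ.apply_symm_apply]
    push_cast
    simp

theorem psize_eq_sum_fin (n : ℕ) (f : ℕ → ℕ) : (psize n f : ℤ) = ∑ i : Fin n, (f i : ℤ) := by
  rw [psize, Fin.sum_univ_eq_sum_range (fun i => (f i : ℤ)) n]
  push_cast
  rfl

theorem sim_p_iff_affine_orbit_general (p n : ℕ)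
    (f g : ℕ → ℕ)
    (hfn : psize n f = n) (hgn : psize n g = n) :
    (∃ σ : Equiv.Perm (Fin n), ∀ i : Fin n,
        (((f (i : ℕ) : ℤ) - ((i : ℕ) + 1) : ℤ) : ZMod p)
          = (((g ((σ i : Fin n) : ℕ) : ℤ) - (((σ i : Fin n) : ℕ) + 1) : ℤ) : ZMod p))
    ↔ (∃ σ : Equiv.Perm (Fin n), ∃ t : Fin n → ℤ, (∑ i, t i) = 0 ∧
        ∀ i : Fin n, (g (i : ℕ) : ℤ) - ((i : ℕ) + 1)
          = ((f ((σ i : Fin n) : ℕ) : ℤ) - (((σ i : Fin n) : ℕ) + 1)) + p * t i) := by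
  apply exists_perm_intCast_eq_iff_exists_perm_add_mul p
    (fun i : Fin n => (f i : ℤ) - ((i : ℕ) + 1)) (fun i : Fin n => (g i : ℤ) - ((i : ℕ) + 1))
  rw [sum_sub_distrib, sum_sub_distrib, ← psize_eq_sum_fin, ← psize_eq_sum_fin, hfn, hgn]

/-- for partitions `λ, μ` of `n` (padded to `n`-tuples), the tuples
`λ + ρ_n` and `μ + ρ_n` (where `ρ_n = (-1,…,-n)`, so entry `i` is `λ_i - i`) agree up
to a permutation modulo `p` if and only if `μ` lies in the orbit of `λ` under the
`ρ_n`-shifted action of the affine Weyl group `W_n^p` of type `A_{n-1}`.  An element of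
`W_n^p` is a coordinate permutation followed by a translation by `p` times an element of
the root lattice, i.e. `p` times an integer vector with coordinate sum `0`. -/
theorem sim_p_iff_affine_orbit (p n : ℕ) (hp : p.Prime) (hn : 1 ≤ n)
    (f g : ℕ → ℕ) (hf : IsPartWithin n f) (hg : IsPartWithin n g)
    (hfn : psize n f = n) (hgn : psize n g = n) :
    (∃ σ : Equiv.Perm (Fin n), ∀ i : Fin n,
        (((f (i : ℕ) : ℤ) - ((i : ℕ) + 1) : ℤ) : ZMod p)
          = (((g ((σ i : Fin n) : ℕ) : ℤ) - (((σ i : Fin n) : ℕ) + 1) : ℤ) : ZMod p))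
    ↔ (∃ σ : Equiv.Perm (Fin n), ∃ t : Fin n → ℤ, (∑ i, t i) = 0 ∧
        ∀ i : Fin n, (g (i : ℕ) : ℤ) - ((i : ℕ) + 1)
          = ((f ((σ i : Fin n) : ℕ) : ℤ) - (((σ i : Fin n) : ℕ) + 1)) + p * t i) :=
  sim_p_iff_affine_orbit_general p n f g hfn hgn
end

section
/- Let δ be an integer, λ a partition with at most n parts, and set ρ_n(δ) = (δ, -1, -2, ..., -n) ∈ ℝ^{n+1} and λ̂ = (-|λ|, λ_1, ..., λ_n). If (μ, λ') is a δ-pair obtained by adding a strip in row i to μ = λ, then λ̂' = s_{0,i} ·_δ λ̂, where s_{0,i} is the reflection swapping coordinates 0 and i and w ·_δ x = w(x + ρ_n(δ)) - ρ_n(δ). -/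
/-- `λ̂ = (-|λ|, λ_1, …, λ_n) ∈ ℤ^{n+1}` (coordinates indexed by `{0,…,n}`). -/
def hatP (n : ℕ) (f : ℕ → ℕ) : Fin (n + 1) → ℤ :=
  fun m => if (m : ℕ) = 0 then -(psize n f : ℤ) else (f ((m : ℕ) - 1) : ℤ)

/-- `ρ_n(δ) = (δ, -1, -2, …, -n)`. -/
def rhoP (n : ℕ) (δ : ℤ) : Fin (n + 1) → ℤ :=
  fun m => if (m : ℕ) = 0 then δ else -((m : ℕ) : ℤ)

/-! The reflection `s_{0,i}` only moves coordinates `0` and `i`, and every other coordinate of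
`λ̂` is unchanged. In coordinate `i` the shifted value `λ_i + ρ_i = λ_i - i` is traded for
`-|λ| + δ`, which is `λ'_i - i` exactly by the content condition; in coordinate `0`,
`λ_i - i - δ = -|λ'|` because adding the strip raises `|λ|` by `λ'_i - λ_i`. -/

open Finset

lemma psize_eq_add_sub_of_eq_off {n r : ℕ} {f g : ℕ → ℕ} (hr : r < n) (hfg : ∀ j, j ≠ r → g j = f j) :
    (psize n g : ℤ) = psize n f + g r - f r := by
  have hmem : r ∈ range n := mem_range.mpr hr
  have hrest : ∑ j ∈ (range n).erase r, g j = ∑ j ∈ (range n).erase r, f j :=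
    sum_congr rfl fun j hj => hfg j (ne_of_mem_erase hj)
  unfold psize
  rw [← add_sum_erase _ g hmem, ← add_sum_erase _ f hmem, hrest]
  push_cast
  ring

/-- if `(λ, λ')` is a `δ`-pair obtained by adding a strip in row `i`
(1-indexed) to `λ`, then `λ̂' = s_{0,i} ·_δ λ̂`, where `s_{0,i}` swaps coordinates `0`
and `i` and `w ·_δ x = w(x + ρ_n(δ)) - ρ_n(δ)` (note `s_{0,i}` is an involution, so
`(s_{0,i} y)(m) = y(s_{0,i} m)`). -/
theorem delta_pair_is_reflection (n : ℕ) (δ : ℤ) (i : ℕ) (hi1 : 1 ≤ i) (hin : i ≤ n)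
    (lam lam' : ℕ → ℕ)
    (hrow : ∀ j, j ≠ i - 1 → lam' j = lam j)
    (hcont : (lam' (i - 1) : ℤ) - i = δ - psize n lam) :
    ∀ m : Fin (n + 1),
      hatP n lam' m
        = (hatP n lam + rhoP n δ) (Equiv.swap (0 : Fin (n + 1)) ⟨i, by omega⟩ m)
            - rhoP n δ m := by
  have hsize := psize_eq_add_sub_of_eq_off (n := n) (r := i - 1) (by omega) hrow
  have hi0 : i ≠ 0 := by omega
  intro m
  rcases eq_or_ne m 0 with rfl | hm0
  · simp only [hatP, rhoP, Fin.coe_ofNat_eq_mod, Nat.zero_mod, ↓reduceIte, Equiv.swap_apply_left,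
      Pi.add_apply, hi0]
    omega
  rcases eq_or_ne m ⟨i, by omega⟩ with rfl | hmi
  · simp only [hatP, rhoP, hi0, ↓reduceIte, Equiv.swap_apply_right, Pi.add_apply,
      Fin.coe_ofNat_eq_mod, Nat.zero_mod, sub_neg_eq_add]
    omega
  · have hm0' : (m : ℕ) ≠ 0 := Fin.val_ne_of_ne hm0
    have hmi' : (m : ℕ) ≠ i := Fin.val_ne_of_ne hmi
    simp [Equiv.swap_apply_of_ne_of_ne hm0 hmi, hatP, rhoP, hm0',
      hrow _ (by omega : (m : ℕ) - 1 ≠ i - 1)]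
end

section
/- Let δ be an integer and λ, μ partitions with at most n parts. Then λ̂ + ρ_n(δ) and μ̂ + ρ_n(δ) are related by a permutation of coordinates {0,...,n} if and only if λ and μ lie in a common maximal chain of δ-pairs λ^{(0)} ⊂ λ^{(1)} ⊂ ... ⊂ λ^{(r)} where consecutive terms (λ^{(i-1)}, λ^{(i)}) form a δ-pair differing in row i. -/
/-- a partition in `Λ_{≤ n}` (at most `n` parts, size at most `n`). -/
def GoodPart (n : ℕ) (f : ℕ → ℕ) : Prop := IsPartWithin n f ∧ psize n f ≤ n

/-- `(μ, λ)` is a `δ`-pair differing in row `i` (1-indexed): `λ \ μ` is a horizontal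
strip in row `i` whose last box has content `λ_i - i = δ - |μ|`. -/
def DeltaPairRow (n : ℕ) (δ : ℤ) (μ lam : ℕ → ℕ) (i : ℕ) : Prop :=
  (∀ j, j ≠ i - 1 → lam j = μ j) ∧ μ (i - 1) < lam (i - 1) ∧
    (lam (i - 1) : ℤ) - i = δ - psize n μ

open Function

theorem exists_strictAnti_range_eq {α : Type*} [LinearOrder α] {k : ℕ} {F : Fin k → α}
    (hF : Injective F) : ∃ Z : Fin k → α, StrictAnti Z ∧ Set.range Z = Set.range F :=
  ⟨(F ∘ Tuple.sort F) ∘ Fin.rev,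
    ((Tuple.monotone_sort F).strictMono_of_injective
      (hF.comp (Tuple.sort F).injective)).comp_strictAnti Fin.rev_strictAnti,
    by rw [Fin.rev_surjective.range_comp, EquivLike.range_comp]⟩

-- `range R = range Z \ {p}`, and a strictly decreasing tuple is determined by its range.
theorem exists_eq_comp_succAbove {α : Type*} [LinearOrder α] {n : ℕ} {Z : Fin (n + 1) → α}
    {R : Fin n → α} {p : α} (hZ : StrictAnti Z) (hR : StrictAnti R) (hp : p ∉ Set.range R)
    (h : Set.range (Fin.cons p R : Fin (n + 1) → α) = Set.range Z) :
    ∃ a, Z a = p ∧ R = Z ∘ a.succAbove := by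
  rw [Fin.range_cons] at h
  obtain ⟨a, ha⟩ : p ∈ Set.range Z := h ▸ Set.mem_insert p _
  refine ⟨a, ha, (hR.range_inj (hZ.comp_strictMono (Fin.strictMono_succAbove a))).1 ?_⟩
  rw [Set.range_comp, Fin.range_succAbove, Set.compl_eq_univ_sdiff, Set.image_sdiff hZ.injective,
    Set.image_univ, Set.image_singleton, ha, ← h, Set.insert_sdiff_self_of_notMem hp]

theorem StrictAnti.antitone_add_val {n : ℕ} {Z : Fin (n + 1) → ℤ} (hZ : StrictAnti Z) :
    Antitone fun i => Z i + (i : ℕ) :=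
  Fin.antitone_iff_succ_le.2 fun i => by
    have := hZ (Fin.castSucc_lt_succ (i := i))
    simp only [Fin.val_succ, Fin.val_castSucc]
    omega

theorem Fin.val_succAbove_le {n : ℕ} (p : Fin (n + 1)) (i : Fin n) :
    (p.succAbove i : ℕ) ≤ i + 1 := by
  rcases lt_or_ge i.castSucc p with h | h
  · rw [Fin.succAbove_of_castSucc_lt _ _ h, Fin.val_castSucc]; omega
  · rw [Fin.succAbove_of_le_castSucc _ _ h, Fin.val_succ]

/-- The coordinates `λ_i - i` of `λ̂ + ρ_n(δ)`, `i = 1, …, n`, stored at `k = i - 1`. -/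
def hatRows (n : ℕ) (f : ℕ → ℕ) (k : Fin n) : ℤ := f k - ((k : ℕ) + 1)

/-- The coordinate `δ - |λ|` of `λ̂ + ρ_n(δ)` at index `0`. -/
def hatPivot (n : ℕ) (δ : ℤ) (f : ℕ → ℕ) : ℤ := δ - psize n f

variable {n : ℕ} {δ : ℤ} {f g : ℕ → ℕ}

theorem hatP_add_rhoP_eq_cons (f : ℕ → ℕ) :
    hatP n f + rhoP n δ = Fin.cons (hatPivot n δ f) (hatRows n f) := by
  ext m
  refine Fin.cases ?_ (fun k => ?_) m
  · simp only [Pi.add_apply, hatP, rhoP, hatPivot, Fin.cons_zero, Fin.val_zero, if_pos]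
    ring
  · simp only [Pi.add_apply, hatP, rhoP, hatRows, Fin.cons_succ, Fin.val_succ,
      Nat.succ_ne_zero, if_false, Nat.add_sub_cancel]
    push_cast
    ring

theorem IsPartWithin.hatRows_strictAnti (hf : IsPartWithin n f) : StrictAnti (hatRows n f) := by
  intro i j hij
  have := hf.1 i j hij.le
  simp only [hatRows, Fin.lt_def] at hij ⊢
  omega

theorem IsPartWithin.ext_hatRows (hf : IsPartWithin n f) (hg : IsPartWithin n g)
    (h : hatRows n f = hatRows n g) : f = g := by
  funext k
  by_cases hk : k < n
  · have := congrFun h ⟨k, hk⟩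
    simp only [hatRows] at this
    omega
  · rw [hf.2 k (by omega), hg.2 k (by omega)]

-- The pivot then adds nothing to the set of coordinates, so that set is the range of the
-- strictly decreasing row coordinates.
theorem IsPartWithin.eq_of_hatPivot_mem (hf : IsPartWithin n f) (hg : IsPartWithin n g)
    (hpf : hatPivot n δ f ∈ Set.range (hatRows n f))
    (hpg : hatPivot n δ g ∈ Set.range (hatRows n g))
    (h : Set.range (hatP n f + rhoP n δ) = Set.range (hatP n g + rhoP n δ)) : f = g := by
  rw [hatP_add_rhoP_eq_cons, hatP_add_rhoP_eq_cons, Fin.range_cons, Fin.range_cons,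
    Set.insert_eq_of_mem hpf, Set.insert_eq_of_mem hpg] at h
  exact hf.ext_hatRows hg ((hf.hatRows_strictAnti.range_inj hg.hatRows_strictAnti).1 h)

theorem psize_eq_of_eq_of_ne {i : ℕ} (hi : i < n) (h : ∀ j, j ≠ i → g j = f j) :
    (psize n g : ℤ) = psize n f + g i - f i := by
  have : (psize n g : ℤ) - psize n f = g i - f i := by
    simp only [psize, Nat.cast_sum, ← Finset.sum_sub_distrib]
    exact Finset.sum_eq_single_of_mem i (Finset.mem_range.2 hi) fun j _ hj => by
      rw [h j hj, sub_self]
  linarith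

theorem DeltaPairRow.hatPivot_eq {i : Fin n} (h : DeltaPairRow n δ f g (i + 1)) :
    hatPivot n δ g = hatRows n f i := by
  obtain ⟨hoff, -, hcontent⟩ := h
  simp only [Nat.add_sub_cancel] at hoff hcontent
  have := psize_eq_of_eq_of_ne i.isLt hoff
  simp only [hatPivot, hatRows]
  push_cast at hcontent
  linarith

theorem DeltaPairRow.hatP_add_rhoP {i : Fin n} (h : DeltaPairRow n δ f g (i + 1)) :
    hatP n g + rhoP n δ = (hatP n f + rhoP n δ) ∘ Equiv.swap 0 i.succ := by
  rw [hatP_add_rhoP_eq_cons, hatP_add_rhoP_eq_cons]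
  ext m
  refine Fin.cases ?_ (fun k => ?_) m
  · simp [h.hatPivot_eq]
  · by_cases hk : k = i
    · subst hk
      have := h.2.2
      simp only [Nat.add_sub_cancel] at this
      simp only [comp_apply, Equiv.swap_apply_right, Fin.cons_succ, Fin.cons_zero, hatRows,
        hatPivot, ← this]
      push_cast
      ring
    · rw [comp_apply, Equiv.swap_apply_of_ne_of_ne (Fin.succ_ne_zero k)
        (fun h' => hk (Fin.succ_injective _ h'))]
      simp [hatRows, h.1 k (fun h' => hk (Fin.ext (by simpa using h')))]

theorem DeltaPairRow.row_le (hg : IsPartWithin n g) {i : ℕ} (h : DeltaPairRow n δ f g i) :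
    i ≤ n := by
  by_contra hi
  have := hg.2 (i - 1) (by omega)
  have := h.2.1
  omega

theorem not_deltaPairRow_one (h : hatPivot n δ f < f 0) (ν : ℕ → ℕ) :
    ¬ DeltaPairRow n δ f ν 1 := by
  rintro ⟨-, hlt, hcontent⟩
  simp only [hatPivot] at h
  simp only [Nat.sub_self, Nat.cast_one] at hlt hcontent
  omega

def IsMaxDeltaChain (n : ℕ) (δ : ℤ) (r : ℕ) (c : ℕ → ℕ → ℕ) : Prop :=
  (∀ s, s ≤ r → GoodPart n (c s)) ∧
    (∀ s, 1 ≤ s → s ≤ r → DeltaPairRow n δ (c (s - 1)) (c s) s) ∧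
    ¬ ∃ ν, GoodPart n ν ∧ DeltaPairRow n δ (c r) ν (r + 1)

def InMaxDeltaChain (n : ℕ) (δ : ℤ) (lam mu : ℕ → ℕ) : Prop :=
  ∃ r c, IsMaxDeltaChain n δ r c ∧ (∃ a ≤ r, lam = c a) ∧ (∃ b ≤ r, mu = c b)

theorem inMaxDeltaChain_self (hf : GoodPart n f) (h : hatPivot n δ f < f 0) :
    InMaxDeltaChain n δ f f :=
  ⟨0, fun _ => f, ⟨fun _ _ => hf, fun _ h₁ h₂ => absurd h₂ (by omega),
    fun ⟨ν, _, hν⟩ => not_deltaPairRow_one h ν hν⟩, ⟨0, le_rfl, rfl⟩, ⟨0, le_rfl, rfl⟩⟩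

theorem IsMaxDeltaChain.exists_perm_of_le {r : ℕ} {c : ℕ → ℕ → ℕ}
    (hc : IsMaxDeltaChain n δ r c) {t : ℕ} (ht : t ≤ r) :
    ∃ σ : Equiv.Perm (Fin (n + 1)), hatP n (c t) + rhoP n δ = (hatP n (c 0) + rhoP n δ) ∘ σ := by
  induction t with
  | zero => exact ⟨Equiv.refl _, rfl⟩
  | succ t ih =>
    obtain ⟨σ, hσ⟩ := ih (by omega)
    have hstep := hc.2.1 (t + 1) (by omega) ht
    simp only [Nat.add_sub_cancel] at hstep
    have ht : t < n := by have := hstep.row_le (hc.1 _ ht).1; omega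
    refine ⟨(Equiv.swap 0 (⟨t, ht⟩ : Fin n).succ).trans σ, ?_⟩
    rw [DeltaPairRow.hatP_add_rhoP (i := ⟨t, ht⟩) hstep, hσ, Equiv.coe_trans]
    rfl

theorem IsMaxDeltaChain.exists_perm {r : ℕ} {c : ℕ → ℕ → ℕ} (hc : IsMaxDeltaChain n δ r c)
    {a b : ℕ} (ha : a ≤ r) (hb : b ≤ r) :
    ∃ σ : Equiv.Perm (Fin (n + 1)), hatP n (c b) + rhoP n δ = (hatP n (c a) + rhoP n δ) ∘ σ := by
  obtain ⟨σa, hσa⟩ := hc.exists_perm_of_le ha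
  obtain ⟨σb, hσb⟩ := hc.exists_perm_of_le hb
  refine ⟨σb.trans σa.symm, ?_⟩
  rw [hσa, hσb]
  ext m
  simp

/-- For strictly decreasing `Z`, the partition whose row coordinates are `Z` with slot `s`
skipped (the truncating `toNat` is exact once `0 ≤ Z (last n) + n`). Its pivot is `Z s` for the
right `δ`, and moving the pivot from slot `s` to `s + 1` is a `δ`-pair in row `s + 1`. -/
def chainPart (Z : Fin (n + 1) → ℤ) (s : Fin (n + 1)) (k : ℕ) : ℕ :=
  if h : k < n then (Z (s.succAbove ⟨k, h⟩) + k + 1).toNat else 0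

variable {Z : Fin (n + 1) → ℤ}

theorem IsPartWithin.eq_chainPart (hf : IsPartWithin n f) {a : Fin (n + 1)}
    (h : hatRows n f = Z ∘ a.succAbove) : f = chainPart Z a := by
  funext k
  by_cases hk : k < n
  · have := congrFun h ⟨k, hk⟩
    simp only [hatRows, comp_apply] at this
    rw [chainPart, dif_pos hk, ← this]
    omega
  · rw [hf.2 k (by omega), chainPart, dif_neg hk]

theorem isPartWithin_chainPart (hZ : StrictAnti Z) (s : Fin (n + 1)) :
    IsPartWithin n (chainPart Z s) := by
  refine ⟨fun i j hij => antitone_nat_of_succ_le (fun k => ?_) hij,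
    fun k hk => dif_neg (by omega)⟩
  unfold chainPart
  split_ifs with h₁ h₂
  · have := hZ.comp_strictMono (Fin.strictMono_succAbove s)
      (show (⟨k, h₂⟩ : Fin n) < ⟨k + 1, h₁⟩ from Nat.lt_succ_self k)
    simp only [comp_apply] at this
    omega
  · omega
  · exact Nat.zero_le _
  · exact le_rfl

section NonnegEntries

variable (hZ : StrictAnti Z) (hZn : 0 ≤ Z (Fin.last n) + n)
include hZ hZn

theorem coe_chainPart (s : Fin (n + 1)) (k : Fin n) :
    (chainPart Z s k : ℤ) = Z (s.succAbove k) + k + 1 := by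
  have h₁ := hZ.antitone_add_val (Fin.le_last (s.succAbove k))
  have h₂ := Fin.val_succAbove_le s k
  simp only [Fin.val_last] at h₁
  rw [chainPart, dif_pos k.isLt, Fin.eta]
  omega

theorem hatRows_chainPart (s : Fin (n + 1)) : hatRows n (chainPart Z s) = Z ∘ s.succAbove := by
  funext k
  rw [hatRows, coe_chainPart hZ hZn, comp_apply]
  ring

theorem psize_chainPart (s : Fin (n + 1)) :
    (psize n (chainPart Z s) : ℤ) = ∑ i, Z i - Z s + ∑ k : Fin n, ((k : ℕ) + 1 : ℤ) := by
  rw [psize, ← Fin.sum_univ_eq_sum_range, Nat.cast_sum, Fin.sum_univ_succAbove Z s]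
  simp only [coe_chainPart hZ hZn, add_assoc, Finset.sum_add_distrib]
  ring

theorem hatPivot_chainPart {a : Fin (n + 1)} (ha : hatPivot n δ (chainPart Z a) = Z a)
    (s : Fin (n + 1)) : hatPivot n δ (chainPart Z s) = Z s := by
  simp only [hatPivot, psize_chainPart hZ hZn] at ha ⊢
  linarith

theorem not_deltaPairRow_chainPart {r : Fin (n + 1)} (hr : ∀ s, r < s → Z s < δ - n) :
    ¬ ∃ ν, GoodPart n ν ∧ DeltaPairRow n δ (chainPart Z r) ν (r + 1) := by
  rintro ⟨ν, hν, hstep⟩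
  rcases Fin.eq_castSucc_or_eq_last r with ⟨t, rfl⟩ | rfl
  · have hpiv := DeltaPairRow.hatPivot_eq (i := t) hstep
    rw [hatRows_chainPart hZ hZn, comp_apply, Fin.succAbove_castSucc_self] at hpiv
    have := hr t.succ Fin.castSucc_lt_succ
    have := hν.2
    simp only [hatPivot] at hpiv
    omega
  · have := hstep.2.1
    simp only [Fin.val_last, Nat.add_sub_cancel, chainPart, lt_irrefl, dif_neg, not_false_eq_true,
      hν.1.2 n le_rfl] at this

variable (hδ : ∀ s, hatPivot n δ (chainPart Z s) = Z s)
include hδ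

theorem deltaPairRow_chainPart (t : Fin n) :
    DeltaPairRow n δ (chainPart Z t.castSucc) (chainPart Z t.succ) (t + 1) := by
  have h₁ := coe_chainPart hZ hZn t.castSucc t
  have h₂ := coe_chainPart hZ hZn t.succ t
  rw [Fin.succAbove_castSucc_self] at h₁
  rw [Fin.succAbove_succ_self] at h₂
  refine ⟨fun j hj => ?_, ?_, ?_⟩
  · simp only [Nat.add_sub_cancel] at hj
    by_cases hjn : j < n
    · simp only [chainPart, dif_pos hjn]
      rcases lt_or_gt_of_ne hj with h | h
      · rw [Fin.succAbove_succ_of_le _ _ (Fin.le_def.2 h.le),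
          Fin.succAbove_castSucc_of_lt _ _ (Fin.lt_def.2 h)]
      · rw [Fin.succAbove_succ_of_lt _ _ (Fin.lt_def.2 h),
          Fin.succAbove_castSucc_of_le _ _ (Fin.le_def.2 h.le)]
    · simp only [chainPart, dif_neg hjn]
  · have := hZ (Fin.castSucc_lt_succ (i := t))
    simp only [Nat.add_sub_cancel]
    omega
  · have := hδ t.castSucc
    simp only [hatPivot] at this
    simp only [Nat.add_sub_cancel]
    push_cast
    linarith

theorem isMaxDeltaChain_chainPart {r : Fin (n + 1)} (hr : δ - n ≤ Z r)
    (hr' : ∀ s, r < s → Z s < δ - n) :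
    IsMaxDeltaChain n δ r fun s => chainPart Z ⟨min s n, by omega⟩ := by
  refine ⟨fun s hs => ?_, fun s hs₁ hs₂ => ?_, ?_⟩ <;> dsimp only
  · have := hZ.antitone
      (show (⟨min s n, by omega⟩ : Fin (n + 1)) ≤ r from Fin.le_def.2 (by simp only; omega))
    have := hδ ⟨min s n, by omega⟩
    refine ⟨isPartWithin_chainPart hZ _, ?_⟩
    simp only [hatPivot] at this
    omega
  · obtain ⟨t, rfl⟩ : ∃ t : Fin n, (t : ℕ) + 1 = s := ⟨⟨s - 1, by omega⟩, by simp only; omega⟩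
    have e₁ : (⟨min (t + 1) n, by omega⟩ : Fin (n + 1)) = t.succ := Fin.ext (by simp)
    have e₂ : (⟨min (t + 1 - 1) n, by omega⟩ : Fin (n + 1)) = t.castSucc := Fin.ext (by simp)
    rw [e₁, e₂]
    exact deltaPairRow_chainPart hZ hZn hδ t
  · have e : (⟨min r n, by omega⟩ : Fin (n + 1)) = r := Fin.ext (min_eq_left r.is_le)
    rw [e]
    exact not_deltaPairRow_chainPart hZ hZn hr'

end NonnegEntries

theorem eq_last_of_hatRows_eq {a : Fin (n + 1)}
    (h : hatRows n f = Z ∘ a.succAbove) (hZn : Z (Fin.last n) + n < 0) : a = Fin.last n := by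
  by_contra ha
  obtain ⟨k, hk⟩ : Fin.last n ∈ Set.range a.succAbove := by
    rw [Fin.range_succAbove]
    exact Ne.symm ha
  have := congrFun h k
  rw [comp_apply, hk] at this
  simp only [hatRows] at this
  omega

theorem inMaxDeltaChain_of_hatRows_eq {lam mu : ℕ → ℕ} (hl : GoodPart n lam)
    (hm : GoodPart n mu) (hZ : StrictAnti Z) {a b : Fin (n + 1)}
    (hpa : Z a = hatPivot n δ lam) (hla : hatRows n lam = Z ∘ a.succAbove)
    (hpb : Z b = hatPivot n δ mu) (hmb : hatRows n mu = Z ∘ b.succAbove) :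
    InMaxDeltaChain n δ lam mu := by
  rcases lt_or_ge (Z (Fin.last n) + n) 0 with hZn | hZn
  · -- slot `last n` cannot hold a row coordinate, so both pivots sit there
    obtain rfl := eq_last_of_hatRows_eq hla hZn
    obtain rfl := eq_last_of_hatRows_eq hmb hZn
    obtain rfl : mu = lam := hm.1.ext_hatRows hl.1 (hmb.trans hla.symm)
    exact inMaxDeltaChain_self hm (by rw [← hpb]; omega)
  have hδ := hatPivot_chainPart hZ hZn (a := a) (by rw [← hl.1.eq_chainPart hla, hpa])
  have hmin : ∀ s : Fin (n + 1), (⟨min s n, by omega⟩ : Fin (n + 1)) = s :=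
    fun s => Fin.ext (min_eq_left s.is_le)
  -- the chain runs up to the last slot `r` with `|chainPart Z r| = δ - Z r ≤ n`
  let S := Finset.univ.filter fun s => δ - n ≤ Z s
  have hS : ∀ s, s ∈ S ↔ δ - n ≤ Z s := fun s => by simp [S]
  have haS : a ∈ S := (hS a).2 (by have := hl.2; rw [hpa, hatPivot]; omega)
  have hbS : b ∈ S := (hS b).2 (by have := hm.2; rw [hpb, hatPivot]; omega)
  refine ⟨_, _, isMaxDeltaChain_chainPart hZ hZn hδ ((hS _).1 (S.max'_mem ⟨a, haS⟩))
    fun s hs => ?_, ⟨a, S.le_max' a haS, ?_⟩, ⟨b, S.le_max' b hbS, ?_⟩⟩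
  · by_contra h
    exact not_le.2 hs (S.le_max' s ((hS s).2 (not_lt.1 h)))
  · rw [hmin, hl.1.eq_chainPart hla]
  · rw [hmin, hm.1.eq_chainPart hmb]

theorem inMaxDeltaChain_of_perm {lam mu : ℕ → ℕ} (hl : GoodPart n lam) (hm : GoodPart n mu)
    {σ : Equiv.Perm (Fin (n + 1))} (hσ : hatP n mu + rhoP n δ = (hatP n lam + rhoP n δ) ∘ σ) :
    InMaxDeltaChain n δ lam mu := by
  have hrange : Set.range (hatP n mu + rhoP n δ) = Set.range (hatP n lam + rhoP n δ) := by
    rw [hσ, EquivLike.range_comp]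
  have hpiv : hatPivot n δ mu ∈ Set.range (hatRows n mu) ↔
      hatPivot n δ lam ∈ Set.range (hatRows n lam) := by
    have := EquivLike.injective_comp σ (hatP n lam + rhoP n δ)
    rw [← hσ, hatP_add_rhoP_eq_cons, hatP_add_rhoP_eq_cons, Fin.cons_injective_iff,
      Fin.cons_injective_iff] at this
    exact not_iff_not.1 (by simpa only [hl.1.hatRows_strictAnti.injective,
      hm.1.hatRows_strictAnti.injective, and_true] using this)
  by_cases hA : hatPivot n δ lam ∈ Set.range (hatRows n lam)
  · obtain rfl := hm.1.eq_of_hatPivot_mem hl.1 (hpiv.2 hA) hA hrange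
    obtain ⟨k, hk⟩ := hA
    have := hm.1.1 0 k (Nat.zero_le _)
    exact inMaxDeltaChain_self hm (by rw [← hk, hatRows]; omega)
  · have hinj := Fin.cons_injective_iff.2 ⟨hA, hl.1.hatRows_strictAnti.injective⟩
    obtain ⟨Z, hZ, hZr⟩ := exists_strictAnti_range_eq hinj
    rw [hatP_add_rhoP_eq_cons, hatP_add_rhoP_eq_cons] at hrange
    obtain ⟨a, hpa, hla⟩ := exists_eq_comp_succAbove hZ hl.1.hatRows_strictAnti hA hZr.symm
    obtain ⟨b, hpb, hmb⟩ := exists_eq_comp_succAbove hZ hm.1.hatRows_strictAnti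
      (mt hpiv.1 hA) (hrange.trans hZr.symm)
    exact inMaxDeltaChain_of_hatRows_eq hl hm hZ hpa hla hpb hmb

/-- `λ̂ + ρ_n(δ)` and `μ̂ + ρ_n(δ)` are related by a permutation of the
coordinates `{0,…,n}` if and only if `λ` and `μ` lie in a common maximal chain of
`δ`-pairs `λ^{(0)} ⊂ λ^{(1)} ⊂ ⋯ ⊂ λ^{(r)}`, consecutive terms `(λ^{(s-1)}, λ^{(s)})`
forming a `δ`-pair differing in row `s`. -/
theorem perm_iff_delta_chain (n : ℕ) (δ : ℤ) (lam mu : ℕ → ℕ)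
    (hl : GoodPart n lam) (hm : GoodPart n mu) :
    (∃ σ : Equiv.Perm (Fin (n + 1)), ∀ m,
        hatP n mu m + rhoP n δ m = hatP n lam (σ m) + rhoP n δ (σ m)) ↔
    (∃ r : ℕ, ∃ c : ℕ → (ℕ → ℕ),
        (∀ s, s ≤ r → GoodPart n (c s)) ∧
        (∀ s, 1 ≤ s → s ≤ r → DeltaPairRow n δ (c (s - 1)) (c s) s) ∧
        (¬ ∃ ν, GoodPart n ν ∧ DeltaPairRow n δ (c r) ν (r + 1)) ∧
        (∃ a, a ≤ r ∧ lam = c a) ∧ (∃ b, b ≤ r ∧ mu = c b)) := by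
  constructor
  · rintro ⟨σ, hσ⟩
    obtain ⟨r, c, ⟨hgood, hstep, hmax⟩, ha, hb⟩ := inMaxDeltaChain_of_perm hl hm (funext hσ)
    exact ⟨r, c, hgood, hstep, hmax, ha, hb⟩
  · rintro ⟨r, c, hgood, hstep, hmax, ⟨a, ha, rfl⟩, ⟨b, hb, rfl⟩⟩
    obtain ⟨σ, hσ⟩ := IsMaxDeltaChain.exists_perm ⟨hgood, hstep, hmax⟩ ha hb
    exact ⟨σ, congrFun hσ⟩
end

section
/- In the quotient of the partition algebra P_n(δ) by the ideal J spanned by diagrams with fewer than n propagating blocks, the image of the half-integer Jucys-Murphy element L_{i+1/2} equals the scalar i (times the identity), for all i ≥ 0. -/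
/-!
Under `φ` every diagram `p_{i+1/2}`, `p_i` dies, so the recursions collapse to
`φ σ_{i+1/2} = w φ σ_{i-1/2} w⁻¹` with `w = (i-1 i)(i i+1)`, whence `φ σ_{i+1/2} = 1`, and
`φ L_{i+1/2} = (i i+1) φ L_{i-1/2} (i i+1) + 1`; since `(i i+1)` is an involution commuting
with scalars, `φ L_{i+1/2} = i` by induction.
-/

theorem eq_one_of_eq_conj_pred {M : Type*} [Monoid M] {σ a b : ℕ → M}
    (hab : ∀ i, a i * b i = 1) (h1 : σ 1 = 1)
    (hrec : ∀ i, 2 ≤ i → σ i = a i * σ (i - 1) * b i) :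
    ∀ i, 1 ≤ i → σ i = 1 := by
  intro i hi
  induction i, hi using Nat.le_induction with
  | base => exact h1
  | succ k hk ih => rw [hrec (k + 1) (by omega), Nat.add_sub_cancel, ih, mul_one, hab]

theorem eq_natCast_of_eq_conj_pred_add_one {R : Type*} [Semiring R] {ℓ u : ℕ → R}
    (hu : ∀ i, u i * u i = 1) (h0 : ℓ 0 = 0)
    (hrec : ∀ i, 1 ≤ i → ℓ i = u i * ℓ (i - 1) * u i + 1) :
    ∀ i, ℓ i = i := by
  intro i
  induction i with
  | zero => rw [h0, Nat.cast_zero]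
  | succ k ih =>
    rw [hrec (k + 1) (by omega), Nat.add_sub_cancel, ih, ← (Nat.cast_commute k _).eq, mul_assoc,
      hu, mul_one, Nat.cast_succ]

theorem jm_half_integer_image_in_quotient_general {F A : Type*} [Field F] [Ring A] [Algebra F A]
    (s : ℕ → ℕ → A) (pH : ℕ → A) (pp : ℕ → A)
    (L : ℕ → A) (LH : ℕ → A) (sigH : ℕ → A)
    (φ : A →ₐ[F] MonoidAlgebra F (Equiv.Perm ℕ))
    (hs : ∀ i j, φ (s i j) = MonoidAlgebra.of F (Equiv.Perm ℕ) (Equiv.swap i j))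
    (hpH : ∀ i, φ (pH i) = 0)
    (hpp : ∀ i, φ (pp i) = 0)
    (hLH0 : LH 0 = 0)
    (hsigH1 : sigH 1 = 1)
    (hLHrec : ∀ i, 1 ≤ i →
      LH i = -(L i * pH i) - pH i * L i + pH i * L i * pp i * pH i
        + s i (i + 1) * LH (i - 1) * s i (i + 1) + sigH i)
    (hsigHrec : ∀ i, 2 ≤ i →
      sigH i = s (i - 1) i * s i (i + 1) * sigH (i - 1) * s i (i + 1) * s (i - 1) i
        + pH (i - 1) * L (i - 1) * s i (i + 1) * pH (i - 1) * s i (i + 1)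
        + s i (i + 1) * pH (i - 1) * L (i - 1) * s i (i + 1) * pH (i - 1)
        - pH (i - 1) * L (i - 1) * s (i - 1) i * pH i * pp i * pH (i - 1)
        - s i (i + 1) * pH (i - 1) * pp i * pH i * s (i - 1) i * L (i - 1) * pH (i - 1) * s i (i + 1)) :
    ∀ i : ℕ, φ (LH i) = (i : MonoidAlgebra F (Equiv.Perm ℕ)) := by
  have hswap : ∀ a b, φ (s a b) * φ (s a b) = 1 := fun a b => by
    rw [hs, ← map_mul, Equiv.swap_mul_self, map_one]
  have hsigH : ∀ i, 1 ≤ i → φ (sigH i) = 1 := by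
    refine eq_one_of_eq_conj_pred (σ := fun i => φ (sigH i))
      (a := fun i => φ (s (i - 1) i) * φ (s i (i + 1)))
      (b := fun i => φ (s i (i + 1)) * φ (s (i - 1) i))
      (fun i => ?_) (by rw [hsigH1, map_one]) (fun i hi => ?_)
    · rw [mul_assoc, ← mul_assoc (φ (s i (i + 1))), hswap, one_mul, hswap]
    · simp only [hsigHrec i hi, map_add, map_sub, map_mul, hpH, hpp, mul_zero, zero_mul,
        add_zero, sub_zero, mul_assoc]
  refine eq_natCast_of_eq_conj_pred_add_one (ℓ := fun i => φ (LH i))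
    (u := fun i => φ (s i (i + 1))) (fun i => hswap _ _) (by rw [hLH0, map_zero])
    (fun i hi => ?_)
  simp only [hLHrec i hi, map_add, map_sub, map_neg, map_mul, hpH, hpp, mul_zero, zero_mul,
    neg_zero, sub_zero, zero_add, hsigH i hi]

/-- Lemma 6.2(iv) of the paper: in the quotient of the partition algebra
`P_n(δ)` by the ideal `J = J_n^{(n-1)}` of diagrams with fewer than `n` propagating
blocks (modelled by the algebra homomorphism `φ` onto the group algebra `F S_n`,
killing the diagrams `p_{i+1/2}` and `p_i` and sending `s_{i,j}` to the transposition
`(i j)`), the image of the half-integer Jucys–Murphy element `L_{i+1/2}` is the scalar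
`i` (times the identity), for all `i ≥ 0`.  Here `s i j` denotes `s_{i,j}`, `pH i`
denotes `p_{i+1/2}`, `pp i` denotes `p_i`, `L i` denotes `L_i`, `sig i` denotes `σ_i`,
`LH i` denotes `L_{i+1/2}` and `sigH i` denotes `σ_{i+1/2}`. -/
theorem jm_half_integer_image_in_quotient {F A : Type*} [Field F] [Ring A] [Algebra F A]
    (n : ℕ) (δ : F)
    (s : ℕ → ℕ → A) (pH : ℕ → A) (pp : ℕ → A)
    (L : ℕ → A) (sig : ℕ → A) (LH : ℕ → A) (sigH : ℕ → A)
    (φ : A →ₐ[F] MonoidAlgebra F (Equiv.Perm ℕ))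
    (hs : ∀ i j, φ (s i j) = MonoidAlgebra.of F (Equiv.Perm ℕ) (Equiv.swap i j))
    (hpH : ∀ i, φ (pH i) = 0)
    (hpp : ∀ i, φ (pp i) = 0)
    (hL0 : L 0 = 0) (hL1 : L 1 = pp 1)
    (hsig1 : sig 1 = 1) (hsig2 : sig 2 = s 1 2)
    (hLrec : ∀ i, 1 ≤ i →
      L (i + 1) = -(s i (i + 1) * L i * pH i) - pH i * L i * s i (i + 1)
        + pH i * L i * pp (i + 1) * pH i + s i (i + 1) * L i * s i (i + 1) + sig (i + 1))
    (hsigrec : ∀ i, 2 ≤ i →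
      sig (i + 1) = s (i - 1) i * s i (i + 1) * sig i * s i (i + 1) * s (i + 1) (i + 2)
        + s i (i + 1) * pH (i - 1) * L (i - 1) * s i (i + 1) * pH (i - 1)
        + pH (i - 1) * L (i - 1) * s i (i + 1) * pH (i - 1)
        - s i (i + 1) * pH (i - 1) * L (i - 1) * s (i - 1) i * pH i * pp i * pH (i - 1)
        - pH (i - 1) * pp i * pH i * s (i - 1) i * L (i - 1) * pH (i - 1) * s i (i + 1))
    (hLH0 : LH 0 = 0)
    (hsigH0 : sigH 0 = 1) (hsigH1 : sigH 1 = 1)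
    (hLHrec : ∀ i, 1 ≤ i →
      LH i = -(L i * pH i) - pH i * L i + pH i * L i * pp i * pH i
        + s i (i + 1) * LH (i - 1) * s i (i + 1) + sigH i)
    (hsigHrec : ∀ i, 2 ≤ i →
      sigH i = s (i - 1) i * s i (i + 1) * sigH (i - 1) * s i (i + 1) * s (i - 1) i
        + pH (i - 1) * L (i - 1) * s i (i + 1) * pH (i - 1) * s i (i + 1)
        + s i (i + 1) * pH (i - 1) * L (i - 1) * s i (i + 1) * pH (i - 1)
        - pH (i - 1) * L (i - 1) * s (i - 1) i * pH i * pp i * pH (i - 1)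
        - s i (i + 1) * pH (i - 1) * pp i * pH i * s (i - 1) i * L (i - 1) * pH (i - 1) * s i (i + 1)) :
    ∀ i : ℕ, φ (LH i) = (i : MonoidAlgebra F (Equiv.Perm ℕ)) :=
  jm_half_integer_image_in_quotient_general s pH pp L LH sigH φ hs hpH hpp hLH0 hsigH1 hLHrec
    hsigHrec
end

section
/- Let k be a field of characteristic p > 0, δ ∈ k nonzero, and λ, μ partitions with λ p-regular, |λ| - |μ| = t ≥ 0. If the cell module Δ_μ of the partition algebra P_n^k(δ) has the simple module L_λ as a composition factor, then tδ - t|μ| - ct(λ) + ct(μ) - t(t-1)/2 = 0 in k, where ct(ν) denotes the sum of contents of all boxes of ν. -/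
/-- `ct(f)`: the sum of the contents `y - x` of all nodes `(x,y)` of the Young
diagram of `f` (0-indexed node `(i,j)` has content `j - i`). -/
def ctsum (n : ℕ) (f : ℕ → ℕ) : ℤ :=
  ∑ i ∈ Finset.range n, ∑ j ∈ Finset.range (f i), ((j : ℤ) - (i : ℤ))

/-- `f` is `p`-regular: no nonzero part is repeated `p` or more times. -/
def PRegular (p : ℕ) (f : ℕ → ℕ) : Prop :=
  ¬ ∃ i, 0 < f (i + (p - 1)) ∧ f i = f (i + (p - 1))

/-!
Since `Z` acts by a scalar on each of `Δ_λ` and `Δ_μ`, it acts on every quotient of `Δ_λ` and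
every subquotient of `Δ_μ` by the same scalar. The simple module `L_λ` is both, so the two
scalars agree, and their difference is exactly the expression of the theorem because
`C(|μ| + t, 2) = C(|μ|, 2) + t|μ| + C(t, 2)`.
-/

theorem Nat.add_choose_two (a b : ℕ) :
    (a + b).choose 2 = a.choose 2 + a * b + b.choose 2 := by
  rw [Nat.add_choose_eq, Finset.Nat.sum_antidiagonal_eq_sum_range_succ_mk, Finset.sum_range_succ,
    Finset.sum_range_succ, Finset.sum_range_one]
  simp [add_comm, add_left_comm, add_assoc]

section ScalarAction

variable {A : Type*} [Ring A] {V W : Type*} [AddCommGroup V] [Module A V]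
  [AddCommGroup W] [Module A W]

theorem smul_eq_smul_of_surjective (f : V →ₗ[A] W) (hf : Function.Surjective f) {a b : A}
    (h : ∀ v : V, a • v = b • v) (w : W) : a • w = b • w := by
  obtain ⟨v, rfl⟩ := hf w
  rw [← map_smul, h, map_smul]

theorem eq_of_forall_algebraMap_smul_eq {k : Type*} [Field k] [Algebra k A] [Nontrivial W]
    {c c' : k} (h : ∀ w : W, algebraMap k A c • w = algebraMap k A c' • w) : c = c' := by
  by_contra hne
  obtain ⟨w, hw⟩ := exists_ne (0 : W)
  have hunit : IsUnit (algebraMap k A (c - c')) := (IsUnit.mk0 _ (sub_ne_zero.2 hne)).map _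
  exact hw (hunit.smul_eq_zero.1 (by rw [map_sub, sub_smul, h, sub_self]))

end ScalarAction

/-- The scalar by which `Z_n` acts on the cell module `Δ_f`. -/
def centralScalar {k : Type*} [CommRing k] (n : ℕ) (δ : k) (f : ℕ → ℕ) : k :=
  ((n - psize n f : ℕ) : k) * δ + ((Nat.choose (psize n f) 2 : ℕ) : k) + ((ctsum n f : ℤ) : k)

theorem centralScalar_sub_centralScalar {k : Type*} [CommRing k] {n t : ℕ} (δ : k)
    {lam mu : ℕ → ℕ} (ht : psize n lam = psize n mu + t) (hn : psize n lam ≤ n) :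
    centralScalar n δ mu - centralScalar n δ lam =
      (t : k) * δ - (t : k) * ((psize n mu : ℕ) : k)
        - ((ctsum n lam : ℤ) : k) + ((ctsum n mu : ℤ) : k)
        - ((t * (t - 1) / 2 : ℕ) : k) := by
  unfold centralScalar
  rw [show n - psize n mu = n - psize n lam + t by omega, ht, Nat.add_choose_two,
    ← Nat.choose_two_right]
  push_cast
  ring

theorem partition_algebra_necessary_condition_general
    {k : Type*} [Field k]
    {A : Type*} [Ring A] [Algebra k A]
    (n : ℕ) (δ : k)
    (lam mu : ℕ → ℕ)
    (hlsz : psize n lam ≤ n)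
    (t : ℕ) (ht : psize n lam = psize n mu + t)
    (Z : A)
    (Δlam Δmu Lmod : Type*)
    [AddCommGroup Δlam] [Module A Δlam]
    [AddCommGroup Δmu] [Module A Δmu]
    [AddCommGroup Lmod] [Module A Lmod]
    (hLsimple : IsSimpleModule A Lmod)
    (hZlam : ∀ v : Δlam, Z • v =
      (algebraMap k A (((n - psize n lam : ℕ) : k) * δ
        + ((Nat.choose (psize n lam) 2 : ℕ) : k) + ((ctsum n lam : ℤ) : k))) • v)
    (hZmu : ∀ v : Δmu, Z • v =
      (algebraMap k A (((n - psize n mu : ℕ) : k) * δ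
        + ((Nat.choose (psize n mu) 2 : ℕ) : k) + ((ctsum n mu : ℤ) : k))) • v)
    (π : Δlam →ₗ[A] Lmod) (hπ : Function.Surjective π)
    (N M : Submodule A Δmu)
    (e : (N ⧸ (Submodule.comap N.subtype M)) ≃ₗ[A] Lmod) :
    (t : k) * δ - (t : k) * ((psize n mu : ℕ) : k)
      - ((ctsum n lam : ℤ) : k) + ((ctsum n mu : ℤ) : k)
      - ((t * (t - 1) / 2 : ℕ) : k) = 0 := by
  have hZL_lam : ∀ w : Lmod, Z • w = algebraMap k A (centralScalar n δ lam) • w :=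
    smul_eq_smul_of_surjective π hπ hZlam
  have hZL_mu : ∀ w : Lmod, Z • w = algebraMap k A (centralScalar n δ mu) • w :=
    smul_eq_smul_of_surjective (e.toLinearMap ∘ₗ (Submodule.comap N.subtype M).mkQ)
      (e.surjective.comp (Submodule.mkQ_surjective _)) (fun x => Subtype.ext (hZmu x))
  have := hLsimple.nontrivial
  rw [← centralScalar_sub_centralScalar δ ht hlsz, sub_eq_zero]
  exact eq_of_forall_algebraMap_smul_eq fun w => (hZL_mu w).symm.trans (hZL_lam w)

/-- Theorem 6.4 of the paper.  `A` plays the role of the partition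
algebra `P_n^k(δ)` over a field `k` of characteristic `p`, with `δ ≠ 0`; `Δlam`, `Δmu`
are the cell modules `Δ_λ`, `Δ_μ`, and `Lmod` is the simple head `L_λ` of `Δ_λ`.  The
central element `Z = Z_n` acts on a cell module `Δ_ν` (with `|ν| = n - t`) by the
scalar `tδ + C(|ν|,2) + ct(ν)` (Lemma 6.3).  The hypothesis `[Δ_μ : L_λ] ≠ 0` is
rendered as: `L_λ` is (isomorphic to) a subquotient `N/M` of `Δ_μ`.  The conclusion is
the identity `tδ - t|μ| - ct(λ) + ct(μ) - t(t-1)/2 = 0` in `k`. -/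
theorem partition_algebra_necessary_condition
    {k : Type*} [Field k] (p : ℕ) [Fact p.Prime] [CharP k p]
    {A : Type*} [Ring A] [Algebra k A]
    (n : ℕ) (δ : k) (hδ : δ ≠ 0)
    (lam mu : ℕ → ℕ) (hlam : IsPartWithin n lam) (hmu : IsPartWithin n mu)
    (hlsz : psize n lam ≤ n) (hmsz : psize n mu ≤ n)
    (hreg : PRegular p lam)
    (t : ℕ) (ht : psize n lam = psize n mu + t)
    (Z : A) (hZcentral : ∀ a : A, Z * a = a * Z)
    (Δlam Δmu Lmod : Type*)
    [AddCommGroup Δlam] [Module A Δlam] [Nontrivial Δlam]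
    [AddCommGroup Δmu] [Module A Δmu]
    [AddCommGroup Lmod] [Module A Lmod] [Nontrivial Lmod]
    (hLsimple : IsSimpleModule A Lmod)
    (hZlam : ∀ v : Δlam, Z • v =
      (algebraMap k A (((n - psize n lam : ℕ) : k) * δ
        + ((Nat.choose (psize n lam) 2 : ℕ) : k) + ((ctsum n lam : ℤ) : k))) • v)
    (hZmu : ∀ v : Δmu, Z • v =
      (algebraMap k A (((n - psize n mu : ℕ) : k) * δ
        + ((Nat.choose (psize n mu) 2 : ℕ) : k) + ((ctsum n mu : ℤ) : k))) • v)
    (π : Δlam →ₗ[A] Lmod) (hπ : Function.Surjective π)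
    (N M : Submodule A Δmu) (hMN : M ≤ N)
    (e : (N ⧸ (Submodule.comap N.subtype M)) ≃ₗ[A] Lmod) :
    (t : k) * δ - (t : k) * ((psize n mu : ℕ) : k)
      - ((ctsum n lam : ℤ) : k) + ((ctsum n mu : ℤ) : k)
      - ((t * (t - 1) / 2 : ℕ) : k) = 0 :=
  partition_algebra_necessary_condition_general n δ lam mu hlsz t ht Z Δlam Δmu Lmod hLsimple hZlam
    hZmu π hπ N M e
end

section
/- Let p be a prime, δ ∈ {1,...,p-1}, n ≥ 0, and λ a partition of size at most n. The orbit O_λ^p(n;δ) = {μ partition, |μ| ≤ n : μ̂ + ρ_n(δ) ∼_p λ̂ + ρ_n(δ)} contains a unique element of minimal size; that is, there exists μ_0 ∈ O_λ^p(n;δ) such that every μ ∈ O_λ^p(n;δ) satisfies |μ| ≥ |μ_0|, with equality only if μ = μ_0. -/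
/-- the integral `(n+1)`-tuple `f̂ + ρ_n(δ) = (δ - |f|, f_1 - 1, …, f_n - n)`. -/
def hatRhoZ (n : ℕ) (δ : ℤ) (f : ℕ → ℕ) : Fin (n + 1) → ℤ :=
  fun m => if (m : ℕ) = 0 then δ - (psize n f : ℤ)
    else (f ((m : ℕ) - 1) : ℤ) - ((m : ℕ) : ℤ)

/-- `μ̂ + ρ_n(δ) ∼_p λ̂ + ρ_n(δ)`: the tuples agree up to a permutation of the
coordinates, modulo `p`. -/
def SimP (p n : ℕ) (δ : ℤ) (mu lam : ℕ → ℕ) : Prop :=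
  ∃ σ : Equiv.Perm (Fin (n + 1)), ∀ m,
    ((hatRhoZ n δ mu m : ℤ) : ZMod p) = ((hatRhoZ n δ lam (σ m) : ℤ) : ZMod p)

/-- membership in the orbit `O_λ^p(n;δ)`. -/
def InOrbit (p n : ℕ) (δ : ℤ) (lam mu : ℕ → ℕ) : Prop :=
  IsPartWithin n mu ∧ psize n mu ≤ n ∧ SimP p n δ mu lam

/-!
Encode a partition `μ` with at most `n` parts by its beta-set `{μ_i - i - 1 | i < n}`, an
`n`-element subset of `[-n, ∞)` whose sum is `|μ|` up to a constant. The orbit condition says that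
the residues mod `p` of the beta-set, together with one extra residue `s`, form the residue
multiset `R` of `λ̂ + ρ_n(δ)`; the extra residue is forced, because the entries of every tuple
`μ̂ + ρ_n(δ)` sum to `δ - n(n+1)/2`.

Among the subsets of `[-n, ∞)` with residue multiset `R`, the abacus `X` with all beads pushed up
has the strictly smallest sum. If `B` is the beta-set of an orbit element, runner `s` of `X` has a
bead `t ∉ B`, so `∑ X ≤ ∑ B + t ≤ ∑ B + max X`, with equality only if `B = X \ {max X}`: this
set is the beta-set of the unique minimal element.
-/

open Finset

theorem Finset.sum_lt_sum_of_forall_lt_sdiff {M : Type*} [AddCommMonoid M] [LinearOrder M]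
    [IsOrderedCancelAddMonoid M] {F S : Finset M} (hcard : #S = #F)
    (hlt : ∀ x ∈ F, ∀ y ∈ S, y ∉ F → x < y) (hne : S ≠ F) :
    ∑ x ∈ F, x < ∑ x ∈ S, x := by
  have hSF : (S \ F).Nonempty := by
    rw [sdiff_nonempty]
    exact fun hsub => hne (eq_of_subset_of_card_le hsub hcard.ge)
  have hcard' : #(F \ S) = #(S \ F) := card_sdiff_comm hcard.symm
  set y₀ := (S \ F).min' hSF
  have hFS : (F \ S).Nonempty := card_pos.mp (hcard' ▸ card_pos.mpr hSF)
  have key : ∑ x ∈ F \ S, x < ∑ y ∈ S \ F, y :=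
    calc ∑ x ∈ F \ S, x < ∑ _x ∈ F \ S, y₀ := by
          refine sum_lt_sum_of_nonempty hFS fun x hx => ?_
          have hy₀ := mem_sdiff.mp ((S \ F).min'_mem hSF)
          exact hlt x (mem_sdiff.mp hx).1 y₀ hy₀.1 hy₀.2
      _ = #(S \ F) • y₀ := by rw [sum_const, hcard']
      _ ≤ ∑ y ∈ S \ F, y := card_nsmul_le_sum _ _ _ fun y hy => (S \ F).min'_le y hy
  rw [← sum_inter_add_sum_sdiff F S, ← sum_inter_add_sum_sdiff S F, inter_comm]
  exact add_lt_add_right key _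

theorem Finset.sum_lt_sum_of_forall_lt_sdiff_fiberwise {M κ : Type*} [AddCommMonoid M]
    [LinearOrder M] [IsOrderedCancelAddMonoid M] [Fintype κ] [DecidableEq κ] (g : M → κ)
    {F S : Finset M} (hcard : ∀ r, #{x ∈ S | g x = r} = #{x ∈ F | g x = r})
    (hlt : ∀ x ∈ F, ∀ y ∈ S, y ∉ F → g x = g y → x < y) (hne : S ≠ F) :
    ∑ x ∈ F, x < ∑ x ∈ S, x := by
  have hfiber : ∀ r, {x ∈ S | g x = r} ≠ {x ∈ F | g x = r} →
      ∑ x ∈ F with g x = r, x < ∑ x ∈ S with g x = r, x := fun r hr =>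
    sum_lt_sum_of_forall_lt_sdiff (hcard r) (fun x hx y hy hyF => by
      simp only [mem_filter] at hx hy hyF
      exact hlt x hx.1 y hy.1 (fun h => hyF ⟨h, hy.2⟩) (hx.2.trans hy.2.symm)) hr
  obtain ⟨r, hr⟩ : ∃ r, {x ∈ S | g x = r} ≠ {x ∈ F | g x = r} := by
    by_contra! h
    exact hne (ext fun x => by simpa using congrArg (x ∈ ·) (h (g x)))
  rw [← sum_fiberwise F g, ← sum_fiberwise S g]
  refine sum_lt_sum (fun r _ => ?_) ⟨r, mem_univ r, hfiber r hr⟩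
  by_cases h : {x ∈ S | g x = r} = {x ∈ F | g x = r}
  · rw [h]
  · exact (hfiber r h).le

theorem exists_perm_forall_eq_iff_map_univ_val_eq {ι α : Type*} [Fintype ι]
    {f g : ι → α} :
    (∃ σ : Equiv.Perm ι, ∀ i, f i = g (σ i)) ↔ univ.val.map f = univ.val.map g := by
  classical
  constructor
  · rintro ⟨σ, hσ⟩
    rw [show f = g ∘ σ from funext hσ, ← Multiset.map_map, Multiset.map_univ_val_equiv]
  · intro h
    have hfib : ∀ c, Fintype.card {i // f i = c} = Fintype.card {i // g i = c} := by
      intro c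
      have := congrArg (Multiset.count c) h
      simp only [Multiset.count_map, eq_comm (a := c)] at this
      simpa only [Fintype.card_subtype, card_def, filter_val] using this
    let σ := Equiv.ofFiberEquiv fun c => Fintype.equivOfCardEq (hfib c)
    exact ⟨σ, fun i => (Equiv.ofFiberEquiv_map _ i).symm⟩

def residues (p : ℕ) (s : Finset ℤ) : Multiset (ZMod p) := s.val.map (↑)

theorem count_residues (p : ℕ) (s : Finset ℤ) (r : ZMod p) :
    (residues p s).count r = #{x ∈ s | ((x : ℤ) : ZMod p) = r} := by
  simp only [residues, Multiset.count_map, eq_comm (a := r), card_def, filter_val]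

theorem cons_residues_erase {p : ℕ} {s : Finset ℤ} {x : ℤ} (hx : x ∈ s) :
    (x : ZMod p) ::ₘ residues p (s.erase x) = residues p s := by
  rw [residues, erase_val, ← Multiset.map_cons, Multiset.cons_erase (mem_val.mpr hx), residues]

/-- The `p`-abacus with first position `a` whose runner `r` carries `R.count r` beads, all
pushed up. -/
noncomputable def pushedUp (p : ℕ) (a : ℤ) (R : Multiset (ZMod p)) : Finset ℤ :=
  {x ∈ Ico a (a + p * Multiset.card R) | x < a + p * R.count ((x : ℤ) : ZMod p)}

section Abacus

variable {p : ℕ} {a : ℤ} {R : Multiset (ZMod p)}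

theorem mem_pushedUp {x : ℤ} :
    x ∈ pushedUp p a R ↔ a ≤ x ∧ x < a + p * R.count (x : ZMod p) := by
  have := R.count_le_card (x : ZMod p)
  have : (p : ℤ) * R.count (x : ZMod p) ≤ p * Multiset.card R := by gcongr
  simp only [pushedUp, mem_filter, mem_Ico]
  omega

variable [NeZero p]

theorem card_filter_Ico_intCast_eq (a : ℤ) (c : ℕ) (r : ZMod p) :
    #{x ∈ Ico a (a + p * c) | ((x : ℤ) : ZMod p) = r} = c := by
  have hp : (0 : ℤ) < p := by exact_mod_cast Nat.pos_of_ne_zero (NeZero.ne p)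
  have hp' : (p : ℚ) ≠ 0 := by exact_mod_cast hp.ne'
  have hr : ∀ x : ℤ, (x : ZMod p) = r ↔ x ≡ (r.val : ℤ) [ZMOD p] := fun x => by
    rw [← ZMod.intCast_eq_intCast_iff]; simp
  simp_rw [hr]
  rw [← Int.natCast_inj, Int.Ico_filter_modEq_card _ _ hp]
  have : (((a + p * c : ℤ) : ℚ) - ((r.val : ℤ) : ℚ)) / ((p : ℤ) : ℚ)
      = ((a : ℚ) - ((r.val : ℤ) : ℚ)) / ((p : ℤ) : ℚ) + c := by
    push_cast; field_simp; ring
  rw [this, Int.ceil_add_natCast]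
  simp

theorem residues_pushedUp : residues p (pushedUp p a R) = R := by
  ext r
  rw [count_residues, ← card_filter_Ico_intCast_eq a (R.count r) r]
  congr 1
  ext x
  simp only [mem_filter, mem_pushedUp, mem_Ico]
  constructor <;> rintro ⟨h, rfl⟩ <;> exact ⟨h, rfl⟩

theorem card_pushedUp : #(pushedUp p a R) = Multiset.card R := by
  simpa only [residues, Multiset.card_map, card_def] using
    congrArg Multiset.card (residues_pushedUp (a := a))

theorem sum_pushedUp_lt {S : Finset ℤ} (hS : ∀ x ∈ S, a ≤ x) (hSR : residues p S = R)
    (hne : S ≠ pushedUp p a R) : ∑ x ∈ pushedUp p a R, x < ∑ x ∈ S, x := by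
  refine sum_lt_sum_of_forall_lt_sdiff_fiberwise (fun x : ℤ => (x : ZMod p)) (fun r => ?_)
    (fun x hx y hy hyX hxy => ?_) hne
  · rw [← count_residues, ← count_residues, hSR, residues_pushedUp]
  · rw [mem_pushedUp] at hx hyX
    rw [hxy] at hx
    have := hS y hy
    omega

theorem sum_pushedUp_erase_le {M : ℤ} (hM : IsGreatest (pushedUp p a R : Set ℤ) M)
    {B : Finset ℤ} (hB : ∀ x ∈ B, a ≤ x) {s : ZMod p} (hBR : s ::ₘ residues p B = R) :
    ∑ x ∈ (pushedUp p a R).erase M, x ≤ ∑ x ∈ B, x ∧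
      (∑ x ∈ B, x = ∑ x ∈ (pushedUp p a R).erase M, x → B = (pushedUp p a R).erase M) := by
  set X := pushedUp p a R
  obtain ⟨t, htX, htB⟩ :
      ∃ t ∈ {x ∈ X | ((x : ℤ) : ZMod p) = s}, t ∉ {x ∈ B | ((x : ℤ) : ZMod p) = s} := by
    apply exists_mem_notMem_of_card_lt_card
    rw [← count_residues, ← count_residues, residues_pushedUp, ← hBR, Multiset.count_cons_self]
    omega
  rw [mem_filter] at htX
  have htB : t ∉ B := fun h => htB (mem_filter.mpr ⟨h, htX.2⟩)
  have hsum_ins : ∑ x ∈ insert t B, x = t + ∑ x ∈ B, x := sum_insert htB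
  have hS : ∀ x ∈ insert t B, a ≤ x := fun x hx => by
    rcases mem_insert.mp hx with rfl | hx
    exacts [(mem_pushedUp.mp htX.1).1, hB x hx]
  have hSR : residues p (insert t B) = R := by
    rw [residues, insert_val_of_notMem htB, Multiset.map_cons, htX.2]
    exact hBR
  have hle : ∑ x ∈ X, x ≤ t + ∑ x ∈ B, x := by
    rw [← hsum_ins]
    by_cases h : insert t B = X
    · rw [h]
    · exact (sum_pushedUp_lt hS hSR h).le
  have hXM : ∑ x ∈ X, x = M + ∑ x ∈ X.erase M, x := (add_sum_erase X _ hM.1).symm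
  have htM : t ≤ M := hM.2 htX.1
  refine ⟨by omega, fun h => ?_⟩
  have htM : t = M := by omega
  have hSX : insert t B = X := by
    by_contra hne
    have : ∑ x ∈ X, x < ∑ x ∈ insert t B, x := sum_pushedUp_lt hS hSR hne
    omega
  rw [← hSX, ← htM, erase_insert htB]

end Abacus

theorem StrictMono.sub_le_sub_fin {n : ℕ} {e : Fin n → ℤ} (he : StrictMono e) {i j : Fin n}
    (hij : i ≤ j) : (j : ℤ) - i ≤ e j - e i := by
  have hsub : (Icc i j).image e ⊆ Icc (e i) (e j) := by
    intro x hx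
    obtain ⟨k, hk, rfl⟩ := mem_image.mp hx
    rw [mem_Icc] at hk ⊢
    exact ⟨he.monotone hk.1, he.monotone hk.2⟩
  have := card_le_card hsub
  rw [card_image_of_injective _ he.injective, Fin.card_Icc, Int.card_Icc] at this
  have : (i : ℕ) ≤ j := hij
  omega

def betaSet (n : ℕ) (f : ℕ → ℕ) : Finset ℤ :=
  (range n).image fun i => (f i : ℤ) - (i + 1)

section BetaSet

variable {n : ℕ} {f : ℕ → ℕ}

theorem IsPartWithin.strictAnti_beta (hf : IsPartWithin n f) :
    StrictAnti fun i : ℕ => (f i : ℤ) - (i + 1) := fun i j hij => by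
  have := hf.1 i j hij.le
  simp only
  omega

theorem card_betaSet (hf : IsPartWithin n f) : #(betaSet n f) = n := by
  rw [betaSet, card_image_of_injective _ hf.strictAnti_beta.injective, card_range]

theorem neg_le_of_mem_betaSet {x : ℤ} (hx : x ∈ betaSet n f) : -(n : ℤ) ≤ x := by
  obtain ⟨i, hi, rfl⟩ := mem_image.mp hx
  have := mem_range.mp hi
  omega

theorem psize_eq_sum_betaSet (hf : IsPartWithin n f) :
    (psize n f : ℤ) = ∑ x ∈ betaSet n f, x + ∑ i ∈ range n, ((i : ℤ) + 1) := by
  rw [betaSet, sum_image fun i _ j _ h => hf.strictAnti_beta.injective h, psize,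
    ← sum_add_distrib]
  push_cast
  simp

theorem orderEmbOfFin_betaSet (hf : IsPartWithin n f) {B : Finset ℤ} (hB : betaSet n f = B)
    (hcard : #B = n) (j : Fin n) : B.orderEmbOfFin hcard j = (f j.rev : ℤ) - (j.rev + 1) := by
  have hmono : StrictMono fun j : Fin n => (f j.rev : ℤ) - (j.rev + 1) :=
    (hf.strictAnti_beta.comp_strictMono Fin.val_strictMono).comp Fin.rev_strictAnti
  have hmem : ∀ j : Fin n, (f j.rev : ℤ) - (j.rev + 1) ∈ B := fun j =>
    hB ▸ mem_image_of_mem _ (mem_range.mpr j.rev.isLt)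
  exact (congrFun (orderEmbOfFin_unique hcard hmem hmono) j).symm

theorem eq_of_betaSet_eq {g : ℕ → ℕ} (hf : IsPartWithin n f) (hg : IsPartWithin n g)
    (h : betaSet n f = betaSet n g) : f = g := by
  funext i
  rcases lt_or_ge i n with hi | hi
  · have := (orderEmbOfFin_betaSet hf h (card_betaSet hg) (Fin.rev ⟨i, hi⟩)).symm.trans
      (orderEmbOfFin_betaSet hg rfl (card_betaSet hg) (Fin.rev ⟨i, hi⟩))
    simp only [Fin.rev_rev] at this
    omega
  · rw [hf.2 i hi, hg.2 i hi]

theorem exists_betaSet_eq {B : Finset ℤ} (hcard : #B = n) (hB : ∀ x ∈ B, -(n : ℤ) ≤ x) :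
    ∃ f, IsPartWithin n f ∧ betaSet n f = B := by
  set e := B.orderEmbOfFin hcard
  have hgap : ∀ i j : Fin n, i ≤ j → (j : ℤ) - i ≤ e j - e i := fun i j =>
    e.strictMono.sub_le_sub_fin
  have hlow : ∀ j : Fin n, -(n : ℤ) + j ≤ e j := fun j => by
    have h0 : (j : ℤ) - 0 ≤ e j - e ⟨0, j.pos⟩ := hgap ⟨0, j.pos⟩ j (Nat.zero_le _)
    have : -(n : ℤ) ≤ e ⟨0, j.pos⟩ := hB _ (B.orderEmbOfFin_mem hcard _)
    omega
  let f : ℕ → ℕ := fun i => if hi : i < n then (e (Fin.rev ⟨i, hi⟩) + i + 1).toNat else 0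
  have hbeta : ∀ i (hi : i < n), (f i : ℤ) - (i + 1) = e (Fin.rev ⟨i, hi⟩) := fun i hi => by
    have := hlow (Fin.rev ⟨i, hi⟩)
    simp only [Fin.val_rev] at this
    simp only [f, dif_pos hi]
    omega
  have hf : IsPartWithin n f := by
    refine ⟨fun i j hij => ?_, fun i hi => by simp [f, hi]⟩
    rcases lt_or_ge j n with hj | hj
    · have := hgap _ _ (Fin.rev_le_rev.mpr (show (⟨i, by omega⟩ : Fin n) ≤ ⟨j, hj⟩ from hij))
      have := hbeta i (by omega)
      have := hbeta j hj
      simp only [Fin.val_rev] at *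
      omega
    · simp [f, hj.not_gt]
  refine ⟨f, hf, eq_of_subset_of_card_le (fun x hx => ?_) (by rw [hcard, card_betaSet hf])⟩
  obtain ⟨i, hi, rfl⟩ := mem_image.mp hx
  rw [hbeta i (mem_range.mp hi)]
  exact B.orderEmbOfFin_mem hcard _

end BetaSet

def hatResidues (p n : ℕ) (δ : ℤ) (f : ℕ → ℕ) : Multiset (ZMod p) :=
  univ.val.map fun m : Fin (n + 1) => ((hatRhoZ n δ f m : ℤ) : ZMod p)

section HatResidues

variable {p n : ℕ} {δ : ℤ}

theorem simP_iff_hatResidues_eq {mu lam : ℕ → ℕ} :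
    SimP p n δ mu lam ↔ hatResidues p n δ mu = hatResidues p n δ lam :=
  exists_perm_forall_eq_iff_map_univ_val_eq (f := fun m => ((hatRhoZ n δ mu m : ℤ) : ZMod p))
    (g := fun m => ((hatRhoZ n δ lam m : ℤ) : ZMod p))

theorem sum_hatRhoZ (f : ℕ → ℕ) :
    ∑ m, hatRhoZ n δ f m = δ - ∑ i ∈ range n, ((i : ℤ) + 1) := by
  rw [Fin.sum_univ_succ]
  simp only [hatRhoZ, Fin.val_zero, Fin.val_succ, if_true, Nat.succ_ne_zero, if_false,
    Nat.add_sub_cancel]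
  rw [Fin.sum_univ_eq_sum_range (fun i => (f i : ℤ) - ((i + 1 : ℕ) : ℤ)), psize]
  push_cast
  rw [sum_sub_distrib]
  ring

theorem sum_hatResidues (f : ℕ → ℕ) :
    (hatResidues p n δ f).sum = ((δ - ∑ i ∈ range n, ((i : ℤ) + 1) : ℤ) : ZMod p) := by
  rw [hatResidues, ← sum_eq_multiset_sum, ← sum_hatRhoZ f, Int.cast_sum]

theorem hatResidues_eq_cons {f : ℕ → ℕ} (hf : IsPartWithin n f) :
    hatResidues p n δ f = ((δ - psize n f : ℤ) : ZMod p) ::ₘ residues p (betaSet n f) := by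
  rw [hatResidues, Fin.univ_succ, cons_val, Multiset.map_cons, map_val, Multiset.map_map,
    residues, betaSet, image_val_of_injOn hf.strictAnti_beta.injective.injOn,
    ← Nat.Iio_eq_range, ← Fin.map_valEmbedding_univ, map_val, Multiset.map_map,
    Multiset.map_map]
  congr 1

theorem simP_iff_exists_cons {mu lam : ℕ → ℕ} (hmu : IsPartWithin n mu) :
    SimP p n δ mu lam ↔ ∃ s, s ::ₘ residues p (betaSet n mu) = hatResidues p n δ lam := by
  rw [simP_iff_hatResidues_eq, hatResidues_eq_cons hmu]
  refine ⟨fun h => ⟨_, h⟩, fun ⟨s, hs⟩ => ?_⟩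
  rw [← hs]
  congr 1
  have := congrArg Multiset.sum hs
  rw [sum_hatResidues, ← sum_hatResidues mu, hatResidues_eq_cons hmu, Multiset.sum_cons,
    Multiset.sum_cons] at this
  exact (add_right_cancel this).symm

end HatResidues

theorem orbit_has_unique_minimal_element_general
    (p : ℕ) [Fact p.Prime] (δ : ℕ)
    (n : ℕ) (lam : ℕ → ℕ) (hlam : IsPartWithin n lam) (hsz : psize n lam ≤ n) :
    ∃ mu0, InOrbit p n (δ : ℤ) lam mu0 ∧
      ∀ mu, InOrbit p n (δ : ℤ) lam mu →
        psize n mu0 ≤ psize n mu ∧ (psize n mu = psize n mu0 → mu = mu0) := by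
  set X := pushedUp p (-n) (hatResidues p n δ lam)
  have hcardX : #X = n + 1 := by
    rw [card_pushedUp, hatResidues, Multiset.card_map, card_val, card_univ, Fintype.card_fin]
  have hX : X.Nonempty := card_pos.mp (by omega)
  have hM : IsGreatest (X : Set ℤ) (X.max' hX) := ⟨X.max'_mem hX, fun x hx => X.le_max' x hx⟩
  obtain ⟨mu0, hmu0, hβ0⟩ := exists_betaSet_eq (B := X.erase (X.max' hX))
    (by rw [card_erase_of_mem hM.1, hcardX, Nat.add_sub_cancel])
    (fun x hx => (mem_pushedUp.mp (mem_of_mem_erase hx)).1)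
  have hmin : ∀ mu, IsPartWithin n mu → SimP p n δ mu lam →
      psize n mu0 ≤ psize n mu ∧ (psize n mu = psize n mu0 → mu = mu0) := by
    intro mu hmu hsim
    obtain ⟨s, hs⟩ := (simP_iff_exists_cons hmu).mp hsim
    have key : ∑ x ∈ betaSet n mu0, x ≤ ∑ x ∈ betaSet n mu, x ∧
        (∑ x ∈ betaSet n mu, x = ∑ x ∈ betaSet n mu0, x → betaSet n mu = betaSet n mu0) :=
      hβ0 ▸ sum_pushedUp_erase_le hM (fun x hx => neg_le_of_mem_betaSet hx) hs
    have h0 := psize_eq_sum_betaSet hmu0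
    have h1 := psize_eq_sum_betaSet hmu
    exact ⟨by omega, fun h => eq_of_betaSet_eq hmu hmu0 (key.2 (by omega))⟩
  have hsim0 : SimP p n δ mu0 lam := (simP_iff_exists_cons hmu0).mpr
    ⟨_, hβ0 ▸ (cons_residues_erase hM.1).trans residues_pushedUp⟩
  exact ⟨mu0, ⟨hmu0, (hmin lam hlam ⟨1, fun _ => rfl⟩).1.trans hsz, hsim0⟩,
    fun mu hmu => hmin mu hmu.1 hmu.2.2⟩

/-- Proposition 8.4 of the paper: for `δ ∈ {1,…,p-1}` the orbit
`O_λ^p(n;δ)` contains a unique element of minimal size. -/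
theorem orbit_has_unique_minimal_element
    (p : ℕ) [Fact p.Prime] (δ : ℕ) (hδ1 : 1 ≤ δ) (hδp : δ ≤ p - 1)
    (n : ℕ) (lam : ℕ → ℕ) (hlam : IsPartWithin n lam) (hsz : psize n lam ≤ n) :
    ∃ mu0, InOrbit p n (δ : ℤ) lam mu0 ∧
      ∀ mu, InOrbit p n (δ : ℤ) lam mu →
        psize n mu0 ≤ psize n mu ∧ (psize n mu = psize n mu0 → mu = mu0) :=
  orbit_has_unique_minimal_element_general p δ n lam hlam hsz
end

section
/- Let λ be a p-regular partition of n > 1 such that for every row j < i, removing a removable node in row j yields a p-singular partition, where i is the minimal row index with λ - ε_i p-regular. Then λ has the form λ = (b^a, (b-1)^{p-1}, (b-2)^{p-1}, ..., (b-t+1)^{p-1}, (b-t)^{p-1}, ...) for some 1 ≤ a < p, b > 0, t ≥ 0, where row i is the last row of the block of parts equal to b - t. -/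
/-- `λ - ε_i`: remove one box from (0-indexed) row `i`. -/
def removeBox (f : ℕ → ℕ) (i : ℕ) : ℕ → ℕ :=
  fun j => if j = i then f i - 1 else f j

/-!
Work with 0-indexed rows and write `q = p - 1`. If removing the box at the end of a removable
row `k` of a `p`-regular partition creates `p` equal nonzero rows, these can only be row `k`
and the `q` rows below it, so rows `k + 1, …, k + q` all have length `λ k - 1`. Row `k + q`
is then removable by `p`-regularity, and iterating from the last row of the top block shows
that above the first row whose removal keeps `p`-regularity, `λ` descends in steps of one
through blocks of exactly `q` rows; that row must be the last of such a block.
-/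

theorem Antitone.exists_first_lt_apply_zero {α : Type*} [LinearOrder α] {f : ℕ → α} {j : ℕ}
    (hf : Antitone f) (hj : f j < f 0) :
    ∃ a, 1 ≤ a ∧ a ≤ j ∧ f a < f 0 ∧ ∀ l < a, f l = f 0 := by
  have h : ∃ a, f a < f 0 := ⟨j, hj⟩
  exact ⟨Nat.find h, (Nat.find_pos h).mpr (lt_irrefl _), Nat.find_min' h hj, Nat.find_spec h,
    fun l hl => le_antisymm (hf (Nat.zero_le l)) (not_lt.mp (Nat.find_min h hl))⟩

namespace PRegular

variable {p m k : ℕ} {f : ℕ → ℕ}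

theorem apply_add_lt (hreg : PRegular p f) (hf : Antitone f) (hm : 0 < f m) :
    f (m + (p - 1)) < f m := by
  refine (hf (Nat.le_add_right m _)).lt_of_ne fun heq => hreg ⟨m, ?_, heq.symm⟩
  omega

theorem two_le (hreg : PRegular p f) (hf : Antitone f) (hm : 0 < f m) : 2 ≤ p := by
  have := hreg.apply_add_lt hf hm
  by_contra hp
  rw [show p - 1 = 0 by omega, add_zero] at this
  exact this.false

theorem apply_add_eq_of_not_pRegular_removeBox (hreg : PRegular p f) (hf : Antitone f)
    (hsing : ¬ PRegular p (removeBox f k)) :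
    0 < f (k + (p - 1)) ∧ f (k + (p - 1)) = f k - 1 := by
  obtain ⟨i, hpos, heq⟩ := not_not.mp hsing
  simp only [removeBox] at hpos heq
  by_cases hik : i = k
  · subst hik
    have hp : 2 ≤ p := by
      by_contra hp
      rw [show p - 1 = 0 by omega, add_zero, if_pos rfl] at hpos
      exact hp (hreg.two_le hf (m := i) (by omega))
    simp only [show i + (p - 1) ≠ i by omega, ↓reduceIte] at hpos heq
    exact ⟨hpos, heq.symm⟩
  · rw [if_neg hik] at heq
    by_cases hik' : i + (p - 1) = k
    · rw [if_pos hik'] at hpos heq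
      have : f k ≤ f i := hf (by omega)
      omega
    · rw [if_neg hik'] at hpos heq
      exact absurd ⟨i, hpos, heq⟩ hreg

theorem eq_sub_one_of_not_pRegular_removeBox (hreg : PRegular p f) (hf : Antitone f)
    (hk : f (k + 1) < f k) (hsing : ¬ PRegular p (removeBox f k)) :
    0 < f k - 1 ∧ ∀ j, k < j → j ≤ k + (p - 1) → f j = f k - 1 := by
  obtain ⟨hpos, hlast⟩ := hreg.apply_add_eq_of_not_pRegular_removeBox hf hsing
  refine ⟨hlast ▸ hpos, fun j hkj hjq => ?_⟩
  have : f (k + (p - 1)) ≤ f j := hf hjq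
  have : f j ≤ f (k + 1) := hf hkj
  omega

end PRegular

section Staircase

variable {p r k : ℕ} {f : ℕ → ℕ} (hf : Antitone f) (hreg : PRegular p f)
  (hsing : ∀ k < r, f (k + 1) < f k → ¬ PRegular p (removeBox f k))
include hf hreg hsing

theorem apply_eq_sub_of_not_pRegular_removeBox (hk : f (k + 1) < f k) (s : ℕ)
    (hs : k + s * (p - 1) < r) :
    0 < f k - (s + 1) ∧
      ∀ j, k + s * (p - 1) < j → j ≤ k + (s + 1) * (p - 1) → f j = f k - (s + 1) := by
  induction s with
  | zero =>
    simpa using hreg.eq_sub_one_of_not_pRegular_removeBox hf hk (hsing k (by simpa using hs) hk)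
  | succ s ih =>
    have hp : 2 ≤ p := hreg.two_le hf (m := k) (by omega)
    set m := k + (s + 1) * (p - 1) with hm
    have hmk : m = k + s * (p - 1) + (p - 1) := by rw [hm, add_one_mul, add_assoc]
    obtain ⟨hpos, hblock⟩ := ih (by omega)
    have hfm : f m = f k - (s + 1) := hblock m (by omega) le_rfl
    -- rows `m - (p - 2), …, m` are equal and nonzero, so row `m + 1` is shorter
    have hdrop : f (m + 1) < f m := by
      have hstart : f (k + s * (p - 1) + 1) = f m := by
        rw [hfm]; exact hblock _ (by omega) (by omega)
      have h := hreg.apply_add_lt hf (m := k + s * (p - 1) + 1) (by omega)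
      rwa [hstart, show k + s * (p - 1) + 1 + (p - 1) = m + 1 by omega] at h
    obtain ⟨hpos', hnext⟩ :=
      hreg.eq_sub_one_of_not_pRegular_removeBox hf hdrop (hsing m hs hdrop)
    refine ⟨by omega, fun j hj hj' => ?_⟩
    rw [hnext j hj (by rw [add_one_mul] at hj'; omega), hfm]
    omega

theorem exists_eq_add_mul_of_not_pRegular_removeBox (hk : f (k + 1) < f k)
    (hr : f (r + 1) < f r) (hkr : k ≤ r) : ∃ t, r = k + t * (p - 1) := by
  have hp : 2 ≤ p := hreg.two_le hf (m := k) (by omega)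
  refine ⟨(r - k) / (p - 1), ?_⟩
  have hdiv := Nat.div_add_mod (r - k) (p - 1)
  have hmod := Nat.mod_lt (r - k) (show 0 < p - 1 by omega)
  rw [mul_comm] at hdiv
  by_contra hne
  obtain ⟨-, hblock⟩ := apply_eq_sub_of_not_pRegular_removeBox hf hreg hsing hk
    ((r - k) / (p - 1)) (by omega)
  have := hblock r (by omega) (by rw [add_one_mul]; omega)
  have := hblock (r + 1) (by omega) (by rw [add_one_mul]; omega)
  omega

end Staircase

theorem shape_of_minimal_removable_row_general (p : ℕ) (n : ℕ)
    (lam : ℕ → ℕ) (hpart : IsPartWithin n lam)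
    (hreg : PRegular p lam)
    (i : ℕ) (hi1 : 1 ≤ i)
    (hrem : lam i < lam (i - 1))
    (hmin : ∀ j, 1 ≤ j → j < i → lam j < lam (j - 1) → ¬ PRegular p (removeBox lam (j - 1))) :
    ∃ a b t : ℕ, 1 ≤ a ∧ a < p ∧ 0 < b ∧ i = a + t * (p - 1) ∧
      (∀ j, 1 ≤ j → j ≤ a → lam (j - 1) = b) ∧
      (∀ s j, 1 ≤ s → s ≤ t → a + (s - 1) * (p - 1) < j → j ≤ a + s * (p - 1) →
        lam (j - 1) = b - s) := by
  have hf : Antitone lam := fun x y h => hpart.1 x y h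
  obtain ⟨r, rfl⟩ : ∃ r, i = r + 1 := ⟨i - 1, by omega⟩
  simp only [add_tsub_cancel_right] at hrem
  have hsing : ∀ k < r, lam (k + 1) < lam k → ¬ PRegular p (removeBox lam k) :=
    fun k hk hdrop => by simpa using hmin (k + 1) (by omega) (by omega) (by simpa using hdrop)
  obtain ⟨a, ha, har, hdrop, hblock⟩ :=
    hf.exists_first_lt_apply_zero (hrem.trans_le (hf (Nat.zero_le r)))
  have hp : 2 ≤ p := hreg.two_le hf (m := 0) (by omega)
  have hap : a < p := by
    have := hreg.apply_add_lt hf (m := 0) (by omega)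
    by_contra h
    simp [hblock (p - 1) (by omega)] at this
  have hk : lam (a - 1 + 1) < lam (a - 1) := by
    rwa [Nat.sub_add_cancel ha, hblock (a - 1) (by omega)]
  obtain ⟨t, hrt⟩ :=
    exists_eq_add_mul_of_not_pRegular_removeBox hf hreg hsing hk hrem (by omega)
  refine ⟨a, lam 0, t, ha, hap, by omega, by omega, fun j hj hja => hblock _ (by omega), ?_⟩
  rintro s j hs hst hj hj'
  obtain ⟨s, rfl⟩ : ∃ s', s = s' + 1 := ⟨s - 1, by omega⟩
  have hst' : s * (p - 1) < t * (p - 1) := Nat.mul_lt_mul_of_pos_right (by omega) (by omega)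
  obtain ⟨-, hstep⟩ := apply_eq_sub_of_not_pRegular_removeBox hf hreg hsing hk s (by omega)
  rw [add_tsub_cancel_right] at hj
  rw [add_one_mul] at hj'
  rw [hstep (j - 1) (by omega) (by rw [add_one_mul]; omega), hblock _ (by omega)]

/-- from the proof of Lemma 6.5: let `λ` be a `p`-regular partition of
`n > 1`, and let `i` (1-indexed) be a row with a removable node such that `λ - ε_i` is
`p`-regular, while for every row `j < i` removing a removable node in row `j` yields a
`p`-singular partition.  Then `λ = (b^a, (b-1)^{p-1}, …, (b-t+1)^{p-1}, (b-t)^{p-1}, …)`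
for some `1 ≤ a < p`, `b > 0`, `t ≥ 0`, where row `i = a + t(p-1)` is the last row of
the block of parts equal to `b - t`. -/
theorem shape_of_minimal_removable_row (p : ℕ) (hp : p.Prime) (n : ℕ) (hn : 1 < n)
    (lam : ℕ → ℕ) (hpart : IsPartWithin n lam) (hsz : psize n lam = n)
    (hreg : PRegular p lam)
    (i : ℕ) (hi1 : 1 ≤ i)
    (hrem : lam i < lam (i - 1))
    (hregrem : PRegular p (removeBox lam (i - 1)))
    (hmin : ∀ j, 1 ≤ j → j < i → lam j < lam (j - 1) → ¬ PRegular p (removeBox lam (j - 1))) :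
    ∃ a b t : ℕ, 1 ≤ a ∧ a < p ∧ 0 < b ∧ i = a + t * (p - 1) ∧
      (∀ j, 1 ≤ j → j ≤ a → lam (j - 1) = b) ∧
      (∀ s j, 1 ≤ s → s ≤ t → a + (s - 1) * (p - 1) < j → j ≤ a + s * (p - 1) →
        lam (j - 1) = b - s) :=
  shape_of_minimal_removable_row_general p n lam hpart hreg i hi1 hrem hmin
end

section
/- Let λ be a p-regular partition of n of the form λ = (b^a, (b-1)^{p-1}, ..., (b-t+1)^{p-1}, (b-t)^{p-1}, ...) with 1 < a < p, and let i be the row index such that λ - ε_i is obtained by removing the last box of the parts equal to b-t. Then none of the partitions μ obtained from λ - ε_i by adding a box in a row strictly above row i (so that μ strictly dominates λ and |μ| = n) has the same p-core as λ. -/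
def betaNumber (n : ℕ) (f : ℕ → ℕ) (m : ℕ) : ℤ := f m - (m + 1) + n

theorem runnerCount_lt_of_add_box {p n : ℕ} [Nontrivial (ZMod p)] {f g : ℕ → ℕ} {j k : ℕ}
    (hj : j < n) (hgj : g j = f j + 1) (hg : ∀ m, m ≠ j → m ≠ k → g m = f m)
    (hk : (betaNumber n f k : ZMod p) ≠ betaNumber n f j + 1) :
    runnerCount p n f (betaNumber n f j + 1) < runnerCount p n g (betaNumber n f j + 1) := by
  have hfj : (betaNumber n f j : ZMod p) ≠ betaNumber n f j + 1 := left_ne_add.2 one_ne_zero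
  have hgj' : (betaNumber n g j : ZMod p) = betaNumber n f j + 1 := by
    simp only [betaNumber, hgj]; push_cast; ring
  refine Finset.card_lt_card <| (Finset.ssubset_iff_of_subset fun m hm ↦ ?_).2
    ⟨j, Finset.mem_filter.2 ⟨Finset.mem_range.2 hj, hgj'⟩, fun hm ↦ hfj (Finset.mem_filter.1 hm).2⟩
  obtain ⟨hmn, hmr⟩ := Finset.mem_filter.1 hm
  have hmj : m ≠ j := by rintro rfl; exact hfj hmr
  have hmk : m ≠ k := by rintro rfl; exact hk hmr
  exact Finset.mem_filter.2 ⟨hmn, by rw [hg m hmj hmk]; exact hmr⟩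

/-- `λ = (b^a, (b-1)^{p-1}, …, (b-t)^{p-1}, …)`, with rows numbered from `1`. -/
def HasBlockForm (p a b t : ℕ) (lam : ℕ → ℕ) : Prop :=
  (∀ j, 1 ≤ j → j ≤ a → lam (j - 1) = b) ∧
    ∀ s j, 1 ≤ s → s ≤ t → a + (s - 1) * (p - 1) < j → j ≤ a + s * (p - 1) → lam (j - 1) = b - s

lemma betaNumber_pred {n m : ℕ} (f : ℕ → ℕ) (hm : 1 ≤ m) :
    betaNumber n f (m - 1) = f (m - 1) - m + n := by
  simp [betaNumber, Nat.cast_sub hm]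

lemma exists_eq_add_mul_add_of_lt_of_le {a d t j : ℕ} (h1 : a < j) (h2 : j ≤ a + t * d) :
    ∃ q k, q < t ∧ 0 < k ∧ k ≤ d ∧ j = a + q * d + k := by
  have hd : 0 < d := Nat.pos_of_ne_zero fun hd ↦ by subst hd; omega
  refine ⟨(j - a - 1) / d, (j - a - 1) % d + 1, ?_, Nat.succ_pos _, Nat.mod_lt _ hd, ?_⟩
  · rw [Nat.div_lt_iff_lt_mul hd]
    omega
  · have := Nat.div_add_mod' (j - a - 1) d
    omega

namespace HasBlockForm

variable {p a b t : ℕ} {lam : ℕ → ℕ}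

lemma last_row (h : HasBlockForm p a b t lam) (hp : 1 < p) (hi : 0 < a + t * (p - 1)) :
    lam (a + t * (p - 1) - 1) = b - t := by
  rcases Nat.eq_zero_or_pos t with rfl | ht
  · simpa using h.1 a (by omega) le_rfl
  · refine h.2 t _ ht le_rfl ?_ le_rfl
    have : (t - 1) * (p - 1) < t * (p - 1) := Nat.mul_lt_mul_of_pos_right (by omega) (by omega)
    omega

lemma betaNumber_last_row_ne (h : HasBlockForm p a b t lam) (hp : 1 < p) (hap : a < p)
    (htb : t ≤ b) {n j : ℕ} (hj1 : 1 ≤ j) (hji : j < a + t * (p - 1)) :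
    (betaNumber n lam (a + t * (p - 1) - 1) : ZMod p) ≠ betaNumber n lam (j - 1) + 1 := by
  rw [betaNumber_pred _ hj1, betaNumber_pred _ (by omega), h.last_row hp (by omega)]
  intro hres
  push_cast [Nat.cast_sub htb, Nat.cast_sub hp.le] at hres
  rcases le_or_gt j a with hja | hja
  · rw [h.1 j hj1 hja] at hres
    have hzero : ((a + 1 - j : ℕ) : ZMod p) = 0 := by
      push_cast [Nat.cast_sub (by omega : j ≤ a + 1)]
      linear_combination -hres - t * ZMod.natCast_self p
    exact Nat.not_dvd_of_pos_of_lt (by omega) (by omega) ((ZMod.natCast_eq_zero_iff _ _).1 hzero)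
  · obtain ⟨q, k, hqt, hk0, hkp, rfl⟩ := exists_eq_add_mul_add_of_lt_of_le hja hji.le
    have hrow : lam (a + q * (p - 1) + k - 1) = b - (q + 1) :=
      h.2 (q + 1) _ (by omega) hqt (by rw [Nat.add_sub_cancel]; omega) (by rw [Nat.succ_mul]; omega)
    rw [hrow] at hres
    push_cast [Nat.cast_sub (by omega : q + 1 ≤ b), Nat.cast_sub hp.le] at hres
    have hzero : (k : ZMod p) = 0 := by
      linear_combination hres + (t - q) * ZMod.natCast_self p
    exact Nat.not_dvd_of_pos_of_lt hk0 (by omega) ((ZMod.natCast_eq_zero_iff _ _).1 hzero)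

end HasBlockForm

theorem dominating_additions_have_different_core_general
    (p : ℕ) (hp : p.Prime) (n : ℕ)
    (lam : ℕ → ℕ) (hpart : IsPartWithin n lam)
    (a b t : ℕ) (hap : a < p) (htb : t < b)
    (hform1 : ∀ j, 1 ≤ j → j ≤ a → lam (j - 1) = b)
    (hform2 : ∀ s j, 1 ≤ s → s ≤ t → a + (s - 1) * (p - 1) < j → j ≤ a + s * (p - 1) →
      lam (j - 1) = b - s)
    (i : ℕ) (hi : i = a + t * (p - 1)) :
    ∀ j, 1 ≤ j → j < i →
      ∀ mu : ℕ → ℕ,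
        (∀ m, mu m = if m = j - 1 then lam (j - 1) + 1 else removeBox lam (i - 1) m) →
        IsPartWithin n mu →
        ¬ (∀ r : ZMod p, runnerCount p n mu r = runnerCount p n lam r) := by
  intro j hj1 hji mu hmu _ hcore
  subst hi
  have hform : HasBlockForm p a b t lam := ⟨hform1, hform2⟩
  have : Fact (1 < p) := ⟨hp.one_lt⟩
  have hjn : j - 1 < n := by
    by_contra hle
    have hlast := hform.last_row hp.one_lt (by omega)
    rw [hpart.2 _ (by omega)] at hlast
    omega
  refine (runnerCount_lt_of_add_box (g := mu) hjn ?_ ?_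
    (hform.betaNumber_last_row_ne hp.one_lt hap htb.le hj1 hji)).ne' (hcore _)
  · simp [hmu]
  · intro m hmj hmi
    simp [hmu, removeBox, hmj, hmi]

/-- from the proof of Lemma 6.5: let `λ` be a partition of `n` of the
form `(b^a, (b-1)^{p-1}, …, (b-t+1)^{p-1}, (b-t)^{p-1}, …)` with `1 < a < p`, and let
`i = a + t(p-1)` (1-indexed) be the last row of the block of parts equal to `b - t`.
Then no partition `μ` obtained from `λ - ε_i` by adding a box in a row `j` strictly
above row `i` (so that `μ ⊳ λ - ε_i`, `μ` strictly dominates `λ` and `|μ| = n`) has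
the same `p`-core as `λ`. -/
theorem dominating_additions_have_different_core
    (p : ℕ) (hp : p.Prime) (n : ℕ)
    (lam : ℕ → ℕ) (hpart : IsPartWithin n lam) (hsz : psize n lam = n)
    (a b t : ℕ) (ha1 : 1 < a) (hap : a < p) (hb : 0 < b) (htb : t < b)
    (hform1 : ∀ j, 1 ≤ j → j ≤ a → lam (j - 1) = b)
    (hform2 : ∀ s j, 1 ≤ s → s ≤ t → a + (s - 1) * (p - 1) < j → j ≤ a + s * (p - 1) →
      lam (j - 1) = b - s)
    (i : ℕ) (hi : i = a + t * (p - 1))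
    (hbelow : lam i < b - t) :
    ∀ j, 1 ≤ j → j < i →
      ∀ mu : ℕ → ℕ,
        (∀ m, mu m = if m = j - 1 then lam (j - 1) + 1 else removeBox lam (i - 1) m) →
        IsPartWithin n mu →
        ¬ (∀ r : ZMod p, runnerCount p n mu r = runnerCount p n lam r) :=
  dominating_additions_have_different_core_general p hp n lam hpart a b t hap htb hform1 hform2 i hi
end
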